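/- arXiv:2305.15059 — 8 statements merged into one kernel-verified Lean document; each statement's English description precedes it below -/
import Mathlib

section
/- Let S ⊆ ℝ satisfy the three P_INT axioms: (Isolation) for every x ∈ ℝ there exist y < x < z such that every t ∈ S with y < t < z equals x; (Successor) for every x ∈ ℝ there exists y > x with y ∈ S and no element of S strictly between x and y; (Predecessor) for every x ∈ ℝ there exists y < x with y ∈ S and no element of S strictly between y and x. Then S, with the order induced from ℝ, is order-isomorphic to ℤ. -/
/-- The three P_INT axioms for a set `S ⊆ ℝ`:
(Isolation) every real `x` has a neighbourhood `(y, z)` in which the only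
possible element of `S` is `x` itself;
(Successor) every real `x` has a least element of `S` strictly above it;
(Predecessor) every real `x` has a greatest element of `S` strictly below it. -/
def PIntAxioms (S : Set ℝ) : Prop :=
  (∀ x : ℝ, ∃ y z : ℝ, y < x ∧ x < z ∧ ∀ t ∈ S, y < t → t < z → t = x) ∧
  (∀ x : ℝ, ∃ y : ℝ, x < y ∧ y ∈ S ∧ ∀ t ∈ S, ¬(x < t ∧ t < y)) ∧
  (∀ x : ℝ, ∃ y : ℝ, y < x ∧ y ∈ S ∧ ∀ t ∈ S, ¬(y < t ∧ t < x))

/-- Any `S ⊆ ℝ` satisfying the three P_INT axioms is, with the order induced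
from `ℝ`, order-isomorphic to `ℤ`. -/
theorem pint_orderIso_int (S : Set ℝ) (h : PIntAxioms S) :
    Nonempty (S ≃o ℤ) := by
  obtain ⟨hiso, hsucc, hpred⟩ := h
  choose sc hsc1 hsc2 hsc3 using hsucc
  choose pr hpr1 hpr2 hpr3 using hpred
  have sc_le : ∀ x : ℝ, ∀ s ∈ S, x < s → sc x ≤ s := by
    intro x s hs hxs
    by_contra hlt
    exact hsc3 x s hs ⟨hxs, not_le.mp hlt⟩
  have pr_ge : ∀ x : ℝ, ∀ s ∈ S, s < x → s ≤ pr x := by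
    intro x s hs hxs
    by_contra hlt
    exact hpr3 x s hs ⟨not_le.mp hlt, hxs⟩
  -- succ of pred of an element of S is itself
  have sc_pr : ∀ s ∈ S, sc (pr s) = s := by
    intro s hs
    have h1 : sc (pr s) ≤ s := sc_le (pr s) s hs (hpr1 s)
    rcases lt_or_eq_of_le h1 with h2 | h2
    · exact absurd ⟨hsc1 (pr s), h2⟩ (hpr3 s (sc (pr s)) (hsc2 (pr s)))
    · exact h2
  set s₀ : ℝ := sc 0 with hs₀def
  have hs₀ : s₀ ∈ S := hsc2 0
  set A : ℕ → ℝ := fun n => sc^[n] s₀ with hA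
  set B : ℕ → ℝ := fun n => pr^[n] s₀ with hB
  have hA0 : A 0 = s₀ := rfl
  have hB0 : B 0 = s₀ := rfl
  have hAs : ∀ n, A (n + 1) = sc (A n) := by
    intro n; simp [hA, Function.iterate_succ_apply']
  have hBs : ∀ n, B (n + 1) = pr (B n) := by
    intro n; simp [hB, Function.iterate_succ_apply']
  have hAmem : ∀ n, A n ∈ S := by
    intro n; induction n with
    | zero => exact hs₀
    | succ k ih => rw [hAs]; exact hsc2 _
  have hBmem : ∀ n, B n ∈ S := by
    intro n; induction n with
    | zero => exact hs₀
    | succ k ih => rw [hBs]; exact hpr2 _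
  have hAmono : ∀ n, A n < A (n + 1) := by
    intro n; rw [hAs]; exact hsc1 _
  have hBmono : ∀ n, B (n + 1) < B n := by
    intro n; rw [hBs]; exact hpr1 _
  have hAstrict : StrictMono A := strictMono_nat_of_lt_succ hAmono
  have hBstrict : StrictAnti B := strictAnti_nat_of_succ_lt hBmono
  -- the global map
  set g : ℤ → ℝ := fun n => if 0 ≤ n then A n.toNat else B (-n).toNat with hg
  have hgmem : ∀ n, g n ∈ S := by
    intro n
    by_cases hn : 0 ≤ n
    · simp only [hg, hn, if_pos]; exact hAmem _
    · simp only [hg, hn, if_neg, if_false]; exact hBmem _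
  have hgnat : ∀ k : ℕ, g k = A k := by
    intro k; simp [hg]
  have hgneg : ∀ k : ℕ, g (-(k : ℤ)) = B k := by
    intro k
    rcases Nat.eq_zero_or_pos k with rfl | hk
    · simpa [hA0, hB0] using hgnat 0
    · have : ¬ (0 ≤ -(k : ℤ)) := by omega
      simp only [hg, this, if_neg, if_false, neg_neg, Int.toNat_natCast]
  have hgsucc : ∀ n : ℤ, g (n + 1) = sc (g n) := by
    intro n
    by_cases hn : 0 ≤ n
    · have h1 : 0 ≤ n + 1 := by omega
      have h2 : (n + 1).toNat = n.toNat + 1 := by omega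
      simp only [hg, hn, h1, if_pos, h2]
      exact hAs _
    · by_cases hn1 : n = -1
      · subst hn1
        have : g (-1 + 1) = A 0 := by norm_num [hg]
        rw [this, hA0]
        have hgm1 : g (-1) = B 1 := by
          have := hgneg 1; simpa using this
        rw [hgm1, hBs 0, hB0]
        exact (sc_pr s₀ hs₀).symm
      · have h1 : ¬ (0 ≤ n + 1) := by omega
        have h2 : (-n).toNat = (-(n+1)).toNat + 1 := by omega
        simp only [hg, hn, h1, if_neg, if_false, h2]
        rw [hBs]
        exact (sc_pr _ (hBmem _)).symm
  have hgmono : StrictMono g := by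
    apply strictMono_int_of_lt_succ
    intro n
    rw [hgsucc n]
    exact hsc1 _
  -- surjectivity: elements above s₀
  have claimA : ∀ s ∈ S, s₀ ≤ s → ∃ k : ℕ, A k = s := by
    intro s hs hle
    by_contra hne
    push_neg at hne
    have hall : ∀ k, A k < s := by
      intro k; induction k with
      | zero => exact lt_of_le_of_ne (hA0 ▸ hle) (hne 0)
      | succ m ih =>
        have : A (m + 1) ≤ s := by rw [hAs]; exact sc_le (A m) s hs ih
        exact lt_of_le_of_ne this (hne (m + 1))
    have hbdd : BddAbove (Set.range A) := ⟨s, by rintro _ ⟨k, rfl⟩; exact (hall k).le⟩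
    have hne' : (Set.range A).Nonempty := ⟨A 0, 0, rfl⟩
    set L := sSup (Set.range A) with hL
    obtain ⟨y, z, hy, hz, hiso3⟩ := hiso L
    obtain ⟨_, ⟨k, rfl⟩, hyk⟩ := exists_lt_of_lt_csSup hne' hy
    have hkL : A k ≤ L := le_csSup hbdd ⟨k, rfl⟩
    have hk1L : A (k + 1) ≤ L := le_csSup hbdd ⟨k + 1, rfl⟩
    have e1 : A k = L := hiso3 (A k) (hAmem k) hyk (lt_of_le_of_lt hkL hz)
    have e2 : A (k + 1) = L :=
      hiso3 (A (k + 1)) (hAmem (k + 1)) (lt_trans hyk (hAmono k))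
        (lt_of_le_of_lt hk1L hz)
    exact absurd (e1.trans e2.symm) (ne_of_lt (hAmono k))
  have claimB : ∀ s ∈ S, s < s₀ → ∃ k : ℕ, B k = s := by
    intro s hs hle
    by_contra hne
    push_neg at hne
    have hall : ∀ k, s < B k := by
      intro k; induction k with
      | zero => exact hB0 ▸ hle
      | succ m ih =>
        have : s ≤ B (m + 1) := by rw [hBs]; exact pr_ge (B m) s hs ih
        exact lt_of_le_of_ne this (fun e => hne (m+1) e.symm)
    have hbdd : BddBelow (Set.range B) := ⟨s, by rintro _ ⟨k, rfl⟩; exact (hall k).le⟩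
    have hne' : (Set.range B).Nonempty := ⟨B 0, 0, rfl⟩
    set L := sInf (Set.range B) with hL
    obtain ⟨y, z, hy, hz, hiso3⟩ := hiso L
    obtain ⟨_, ⟨k, rfl⟩, hkz⟩ := exists_lt_of_csInf_lt hne' hz
    have hkL : L ≤ B k := csInf_le hbdd ⟨k, rfl⟩
    have hk1L : L ≤ B (k + 1) := csInf_le hbdd ⟨k + 1, rfl⟩
    have e1 : B k = L := hiso3 (B k) (hBmem k) (lt_of_lt_of_le hy hkL) hkz
    have e2 : B (k + 1) = L :=
      hiso3 (B (k + 1)) (hBmem (k + 1)) (lt_of_lt_of_le hy hk1L)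
        (lt_trans (hBmono k) hkz)
    exact absurd (e2.trans e1.symm) (ne_of_lt (hBmono k))
  -- build the iso
  set e : ℤ → S := fun n => ⟨g n, hgmem n⟩ with he
  have hemono : StrictMono e := fun a b hab => by
    simpa [he, Subtype.mk_lt_mk] using hgmono hab
  have hesurj : Function.Surjective e := by
    rintro ⟨s, hs⟩
    rcases le_or_gt s₀ s with hle | hlt
    · obtain ⟨k, hk⟩ := claimA s hs hle
      exact ⟨(k : ℤ), by simp [he, hgnat k, hk]⟩
    · obtain ⟨k, hk⟩ := claimB s hs hlt
      exact ⟨-(k : ℤ), by simp [he, hgneg k, hk]⟩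
  exact ⟨(StrictMono.orderIsoOfSurjective e hemono hesurj).symm⟩
end

section
/- Let S ⊆ ℝ satisfy the three P_INT axioms. Then for all real numbers a ≤ b, the set S ∩ [a, b] is finite. -/
/-- If `S ⊆ ℝ` satisfies the three P_INT axioms, then the intersection of `S`
with any closed bounded interval `[a, b]` (with `a ≤ b`) is finite. -/
theorem pint_inter_Icc_finite (S : Set ℝ) (h : PIntAxioms S) :
    ∀ a b : ℝ, a ≤ b → (S ∩ Set.Icc a b).Finite := by
  obtain ⟨hiso, -, -⟩ := h
  intro a b _
  have hclosed : IsClosed S := by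
    rw [← isOpen_compl_iff, isOpen_iff_mem_nhds]
    intro x hx
    obtain ⟨y, z, hy, hz, hiso'⟩ := hiso x
    filter_upwards [isOpen_Ioo.mem_nhds (Set.mem_Ioo.mpr ⟨hy, hz⟩)] with t ht hts
    exact hx (hiso' t hts ht.1 ht.2 ▸ hts)
  have hdisc : DiscreteTopology ↥(S ∩ Set.Icc a b) := by
    rw [discreteTopology_subtype_iff]
    intro x hx
    rw [Filter.inf_principal_eq_bot]
    obtain ⟨y, z, hy, hz, hiso'⟩ := hiso x
    have : Set.Ioo y z ∈ nhdsWithin x {x}ᶜ :=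
      mem_nhdsWithin_of_mem_nhds (isOpen_Ioo.mem_nhds ⟨hy, hz⟩)
    filter_upwards [this, self_mem_nhdsWithin] with t ht htne hts
    exact htne (hiso' t hts.1 ht.1 ht.2)
  exact (isCompact_Icc.inter_left hclosed).finite (isDiscrete_iff_discreteTopology.mpr hdisc)
end

section
/- Let S ⊆ ℝ satisfy the three P_INT axioms. Then there exists an order automorphism g of ℝ (a strictly increasing bijection g : ℝ → ℝ) such that the image g(S) equals ℤ. -/
/-!
Isolation makes `S` closed and discrete, so `S` meets every compact interval in a finite set.
Being unbounded in both directions, `S` is then a locally finite linear order without endpoints,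
hence order-isomorphic to `ℤ`. Interpolating such an isomorphism `ℤ → S` linearly on each
`[n, n + 1]` gives an order automorphism of `ℝ` carrying `ℤ` onto `S`; its inverse is the required automorphism.
-/

open Set Filter Topology

theorem isClosed_and_isDiscrete_of_isolated {α : Type*} [LinearOrder α] [TopologicalSpace α]
    [OrderTopology α] {S : Set α}
    (h : ∀ x : α, ∃ y z : α, y < x ∧ x < z ∧ ∀ t ∈ S, y < t → t < z → t = x) :
    IsClosed S ∧ IsDiscrete S := by
  refine isClosed_and_discrete_iff.mpr fun x => ?_
  obtain ⟨y, z, hyx, hxz, hS⟩ := h x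
  rw [disjoint_principal_right]
  filter_upwards [inter_mem_nhdsWithin _ (Ioo_mem_nhds hyx hxz)] with t ht hts
  exact ht.1 (hS t hts ht.2.1 ht.2.2)

theorem nonempty_orderIso_int_of_isClosed_of_isDiscrete {α : Type*} [LinearOrder α]
    [TopologicalSpace α] [CompactIccSpace α] [Nonempty α] {S : Set α}
    (hclosed : IsClosed S) (hdisc : IsDiscrete S)
    (htop : ∀ x, ∃ y ∈ S, x < y) (hbot : ∀ x, ∃ y ∈ S, y < x) :
    Nonempty (ℤ ≃o S) := by
  have hfin : ∀ a b : S, (Icc a b).Finite := fun a b =>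
    ((isCompact_Icc.inter_right hclosed).finite (hdisc.mono inter_subset_right)).preimage
      Subtype.val_injective.injOn |>.subset fun t ht => ⟨ht, t.2⟩
  let := LocallyFiniteOrder.ofFiniteIcc hfin
  let := LinearLocallyFiniteOrder.succOrder S
  let := LinearLocallyFiniteOrder.predOrder S
  have : NoMaxOrder S := ⟨fun a => let ⟨y, hyS, hay⟩ := htop a; ⟨⟨y, hyS⟩, hay⟩⟩
  have : NoMinOrder S := ⟨fun a => let ⟨y, hyS, hya⟩ := hbot a; ⟨⟨y, hyS⟩, hya⟩⟩
  have : Nonempty S := let ⟨y, hyS, _⟩ := htop (Classical.arbitrary α); ⟨⟨y, hyS⟩⟩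
  exact ⟨orderIsoIntOfLinearSuccPredArch.symm⟩

theorem Monotone.exists_mem_Ico_int {α : Type*} [LinearOrder α] {f : ℤ → α} (hf : Monotone f)
    {x : α} (hbot : ∃ n, f n ≤ x) (htop : ∃ n, x < f n) : ∃ n, x ∈ Ico (f n) (f (n + 1)) := by
  obtain ⟨m, hxm⟩ := htop
  have hbdd : ∀ n, f n ≤ x → n ≤ m := fun n hn =>
    le_of_lt <| lt_of_not_ge fun hmn => (hxm.trans_le (hf hmn)).not_ge hn
  obtain ⟨n, hn, hmax⟩ := Int.exists_greatest_of_bdd ⟨m, hbdd⟩ hbot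
  exact ⟨n, hn, lt_of_not_ge fun h => (hmax (n + 1) h).not_gt (lt_add_one n)⟩

noncomputable def intPiecewiseLinear (f : ℤ → ℝ) (r : ℝ) : ℝ :=
  f ⌊r⌋ + Int.fract r * (f (⌊r⌋ + 1) - f ⌊r⌋)

section intPiecewiseLinear

variable {f : ℤ → ℝ}

theorem intPiecewiseLinear_int_add {q : ℝ} (hq : q ∈ Ico 0 1) (n : ℤ) :
    intPiecewiseLinear f (n + q) = f n + q * (f (n + 1) - f n) := by
  have hfloor : ⌊(n : ℝ) + q⌋ = n := by
    rw [Int.floor_intCast_add, Int.floor_eq_zero_iff.mpr hq, add_zero]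
  rw [intPiecewiseLinear, hfloor, Int.fract_intCast_add, Int.fract_eq_self.mpr hq]

theorem intPiecewiseLinear_intCast (n : ℤ) : intPiecewiseLinear f n = f n := by
  simpa using intPiecewiseLinear_int_add (f := f) (q := 0) (by simp) n

theorem intPiecewiseLinear_mem_Ico (hf : StrictMono f) (r : ℝ) :
    intPiecewiseLinear f r ∈ Ico (f ⌊r⌋) (f (⌊r⌋ + 1)) := by
  have hslope : 0 < f (⌊r⌋ + 1) - f ⌊r⌋ := sub_pos.mpr (hf (lt_add_one _))
  have := Int.fract_nonneg r
  have := Int.fract_lt_one r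
  constructor <;> unfold intPiecewiseLinear <;> nlinarith

theorem strictMono_intPiecewiseLinear (hf : StrictMono f) : StrictMono (intPiecewiseLinear f) := by
  intro r s hrs
  rcases (Int.floor_mono hrs.le).eq_or_lt with hfloor | hfloor
  · have hslope : 0 < f (⌊r⌋ + 1) - f ⌊r⌋ := sub_pos.mpr (hf (lt_add_one _))
    have hfract : Int.fract r < Int.fract s := by
      rw [Int.fract, Int.fract, hfloor]; linarith
    unfold intPiecewiseLinear
    rw [← hfloor]
    nlinarith
  · calc intPiecewiseLinear f r < f (⌊r⌋ + 1) := (intPiecewiseLinear_mem_Ico hf r).2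
      _ ≤ f ⌊s⌋ := hf.monotone (Int.add_one_le_iff.mpr hfloor)
      _ ≤ intPiecewiseLinear f s := (intPiecewiseLinear_mem_Ico hf s).1

theorem surjective_intPiecewiseLinear (hf : StrictMono f) (hbot : ∀ x, ∃ n, f n < x)
    (htop : ∀ x, ∃ n, x < f n) : Function.Surjective (intPiecewiseLinear f) := by
  intro x
  obtain ⟨n, hnx, hxn⟩ := hf.monotone.exists_mem_Ico_int
    ((hbot x).imp fun _ => le_of_lt) (htop x)
  have hslope : 0 < f (n + 1) - f n := sub_pos.mpr (hf (lt_add_one n))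
  set q := (x - f n) / (f (n + 1) - f n)
  have hq : q ∈ Ico 0 1 :=
    ⟨div_nonneg (sub_nonneg.mpr hnx) hslope.le, (div_lt_one hslope).mpr (by linarith)⟩
  refine ⟨n + q, ?_⟩
  rw [intPiecewiseLinear_int_add hq, div_mul_cancel₀ _ hslope.ne']
  ring

theorem exists_orderIso_real_extend_int (hf : StrictMono f) (hbot : ∀ x, ∃ n, f n < x)
    (htop : ∀ x, ∃ n, x < f n) : ∃ e : ℝ ≃o ℝ, ∀ n : ℤ, e n = f n :=
  ⟨StrictMono.orderIsoOfSurjective _ (strictMono_intPiecewiseLinear hf)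
    (surjective_intPiecewiseLinear hf hbot htop), intPiecewiseLinear_intCast⟩

end intPiecewiseLinear

/-- If `S ⊆ ℝ` satisfies the three P_INT axioms, then there is an order
automorphism of `ℝ` mapping `S` onto the set of integers. -/
theorem pint_automorphism_to_int (S : Set ℝ) (h : PIntAxioms S) :
    ∃ g : ℝ ≃o ℝ, g '' S = Set.range ((↑) : ℤ → ℝ) := by
  obtain ⟨hisolated, hsucc, hpred⟩ := h
  obtain ⟨hclosed, hdisc⟩ := isClosed_and_isDiscrete_of_isolated hisolated
  have htop : ∀ x, ∃ y ∈ S, x < y := fun x =>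
    let ⟨y, hxy, hyS, _⟩ := hsucc x; ⟨y, hyS, hxy⟩
  have hbot : ∀ x, ∃ y ∈ S, y < x := fun x =>
    let ⟨y, hyx, hyS, _⟩ := hpred x; ⟨y, hyS, hyx⟩
  obtain ⟨φ⟩ := nonempty_orderIso_int_of_isClosed_of_isDiscrete hclosed hdisc htop hbot
  have hrange : range (Subtype.val ∘ φ) = S :=
    (φ.surjective.range_comp _).trans Subtype.range_coe
  rw [← hrange] at htop hbot
  obtain ⟨e, he⟩ := exists_orderIso_real_extend_int
    (Subtype.strictMono_coe _ |>.comp φ.strictMono)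
    (fun x => by obtain ⟨_, ⟨n, rfl⟩, hnx⟩ := hbot x; exact ⟨n, hnx⟩)
    (fun x => by obtain ⟨_, ⟨n, rfl⟩, hxn⟩ := htop x; exact ⟨n, hxn⟩)
  have hS : e '' range ((↑) : ℤ → ℝ) = S := by
    rw [← range_comp, ← hrange]
    exact congrArg range (funext he)
  exact ⟨e.symm, hS ▸ e.symm_image_image _⟩
end

section
/- For every LMIX formula φ, φ is equisatisfiable over ℝ with the MSO(OR) formula ψ = AXIOMS_int(P_INT) ∧ ⟦φ⟧: φ has a model over ℝ if and only if ψ has a model over ℝ. -/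
/-- The comparison symbols `<, ≤, =, ≥, >`. -/
inductive RelSym : Type
  | lt | le | eq | ge | gt

/-- Standard interpretation of a comparison symbol on `ℝ`. -/
def RelSym.interp : RelSym → ℝ → ℝ → Prop
  | .lt => fun a b => a < b
  | .le => fun a b => a ≤ b
  | .eq => fun a b => a = b
  | .ge => fun a b => a ≥ b
  | .gt => fun a b => a > b

/-- First-order formulas over variables (named by naturals, ranging over `ℝ`)
built from: predicate atoms `P_p(x)` (uninterpreted unary predicates, indexed
by naturals), integrality atoms `x ∈ ℤ`, order atoms `x ⋈ y`, and difference
atoms `x - y ⋈ c` (`c` an integer constant), closed under the Boolean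
connectives and quantifiers. -/
inductive Fml : Type
  | pred (p : ℕ) (x : ℕ)
  | isInt (x : ℕ)
  | ord (r : RelSym) (x y : ℕ)
  | diff (r : RelSym) (x y : ℕ) (c : ℤ)
  | not (φ : Fml)
  | and (φ ψ : Fml)
  | or (φ ψ : Fml)
  | imp (φ ψ : Fml)
  | iff (φ ψ : Fml)
  | all (x : ℕ) (φ : Fml)
  | ex (x : ℕ) (φ : Fml)

/-- Semantics over the domain `ℝ`: the interpretation `P` assigns an arbitrary
subset of `ℝ` to each unary predicate symbol, the valuation `v` assigns a real
to each variable; arithmetic symbols are interpreted standardly and `x ∈ ℤ`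
means `v x` has an integer value. -/
def Fml.Holds (P : ℕ → Set ℝ) : Fml → (ℕ → ℝ) → Prop
  | .pred p x, v => v x ∈ P p
  | .isInt x, v => ∃ k : ℤ, v x = (k : ℝ)
  | .ord r x y, v => r.interp (v x) (v y)
  | .diff r x y c, v => r.interp (v x - v y) (c : ℝ)
  | .not φ, v => ¬ φ.Holds P v
  | .and φ ψ, v => φ.Holds P v ∧ ψ.Holds P v
  | .or φ ψ, v => φ.Holds P v ∨ ψ.Holds P v
  | .imp φ ψ, v => φ.Holds P v → ψ.Holds P v
  | .iff φ ψ, v => (φ.Holds P v ↔ ψ.Holds P v)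
  | .all x φ, v => ∀ a : ℝ, φ.Holds P (Function.update v x a)
  | .ex x φ, v => ∃ a : ℝ, φ.Holds P (Function.update v x a)

/-- A formula is satisfiable if it has a model over the domain `ℝ`. -/
def Fml.Satisfiable (φ : Fml) : Prop := ∃ (P : ℕ → Set ℝ) (v : ℕ → ℝ), φ.Holds P v

/-- A code for each comparison symbol. -/
def RelSym.code : RelSym → ℕ
  | .lt => 0 | .le => 1 | .eq => 2 | .ge => 3 | .gt => 4

/-- An effective Gödel numbering of formulas, defined structurally via the
primitive recursive pairing function `Nat.pair` (and the standard encoding of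
`ℤ` into `ℕ`); it is injective by construction. -/
def Fml.encode : Fml → ℕ
  | .pred p x => Nat.pair 0 (Nat.pair p x)
  | .isInt x => Nat.pair 1 x
  | .ord r x y => Nat.pair 2 (Nat.pair r.code (Nat.pair x y))
  | .diff r x y c => Nat.pair 3 (Nat.pair r.code (Nat.pair x (Nat.pair y (Encodable.encode c))))
  | .not φ => Nat.pair 4 φ.encode
  | .and φ ψ => Nat.pair 5 (Nat.pair φ.encode ψ.encode)
  | .or φ ψ => Nat.pair 6 (Nat.pair φ.encode ψ.encode)
  | .imp φ ψ => Nat.pair 7 (Nat.pair φ.encode ψ.encode)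
  | .iff φ ψ => Nat.pair 8 (Nat.pair φ.encode ψ.encode)
  | .all x φ => Nat.pair 9 (Nat.pair x φ.encode)
  | .ex x φ => Nat.pair 10 (Nat.pair x φ.encode)

/-- The fragment LMIX: predicate atoms, integrality atoms and order atoms are
unrestricted, and difference atoms may occur only well-guarded, i.e. in the
contexts `(x ∈ ℤ ∧ y ∈ ℤ ∧ x - y ⋈ c)` or `((x ∈ ℤ ∧ y ∈ ℤ) ⇒ x - y ⋈ c)`. -/
inductive IsLMIX : Fml → Prop
  | pred (p x : ℕ) : IsLMIX (.pred p x)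
  | isInt (x : ℕ) : IsLMIX (.isInt x)
  | ord (r : RelSym) (x y : ℕ) : IsLMIX (.ord r x y)
  | guardAnd (r : RelSym) (x y : ℕ) (c : ℤ) :
      IsLMIX (.and (.and (.isInt x) (.isInt y)) (.diff r x y c))
  | guardImp (r : RelSym) (x y : ℕ) (c : ℤ) :
      IsLMIX (.imp (.and (.isInt x) (.isInt y)) (.diff r x y c))
  | not {φ : Fml} : IsLMIX φ → IsLMIX (.not φ)
  | and {φ ψ : Fml} : IsLMIX φ → IsLMIX ψ → IsLMIX (.and φ ψ)
  | or {φ ψ : Fml} : IsLMIX φ → IsLMIX ψ → IsLMIX (.or φ ψ)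
  | imp {φ ψ : Fml} : IsLMIX φ → IsLMIX ψ → IsLMIX (.imp φ ψ)
  | iff {φ ψ : Fml} : IsLMIX φ → IsLMIX ψ → IsLMIX (.iff φ ψ)
  | all {x : ℕ} {φ : Fml} : IsLMIX φ → IsLMIX (.all x φ)
  | ex {x : ℕ} {φ : Fml} : IsLMIX φ → IsLMIX (.ex x φ)

/-- The predicate symbol `q` occurs in the formula. -/
def Fml.HasPred (q : ℕ) : Fml → Prop
  | .pred p _ => p = q
  | .isInt _ => False
  | .ord _ _ _ => False
  | .diff _ _ _ _ => False
  | .not φ => φ.HasPred q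
  | .and φ ψ => φ.HasPred q ∨ ψ.HasPred q
  | .or φ ψ => φ.HasPred q ∨ ψ.HasPred q
  | .imp φ ψ => φ.HasPred q ∨ ψ.HasPred q
  | .iff φ ψ => φ.HasPred q ∨ ψ.HasPred q
  | .all _ φ => φ.HasPred q
  | .ex _ φ => φ.HasPred q

/-- The flipped comparison symbol, used to rewrite `x - y ⋈ c` (with `c < 0`)
as `y - x ⋈′ (-c)`, with `(⋈,⋈′) ∈ {(=,=),(<,>),(>,<),(≥,≤),(≤,≥)}`. -/
def RelSym.flip : RelSym → RelSym
  | .lt => .gt | .le => .ge | .eq => .eq | .ge => .le | .gt => .lt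

/-- `Succ(u, v)` for the fresh predicate `P_INT` (index `pI`):
`P_INT(u) ∧ P_INT(v) ∧ v < u ∧ ∀w. v < w < u → ¬P_INT(w)`, where the bound
variable `w` is chosen fresh w.r.t. `u` and `v`. -/
def succFml (pI u v : ℕ) : Fml :=
  .and (.and (.and (.pred pI u) (.pred pI v)) (.ord .lt v u))
    (.all (max u v + 1)
      (.imp (.and (.ord .lt v (max u v + 1)) (.ord .lt (max u v + 1) u))
        (.not (.pred pI (max u v + 1)))))

/-- The quantifier-free body `y = z_0 ∧ x ⋈ z_c ∧ ⋀_{0 ≤ i < c} Succ(z_{i+1}, z_i)`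
of the translation of `x - y ⋈ c`, where `z_i` is the variable `base + i`. -/
def diffBody (pI : ℕ) (r : RelSym) (x y base c : ℕ) : Fml :=
  (List.range c).foldr
    (fun i acc => .and (succFml pI (base + i + 1) (base + i)) acc)
    (.and (.ord .eq y base) (.ord r x (base + c)))

/-- Prefixing a formula with `∃ z_0 … ∃ z_c` where `z_i` is `base + i`. -/
def exChain (base c : ℕ) (body : Fml) : Fml :=
  (List.range (c + 1)).foldr (fun i acc => .ex (base + i) acc) body

/-- The translation `⟦x - y ⋈ c⟧` for `c ∈ ℕ`:
`∃ z_0 … z_c. y = z_0 ∧ x ⋈ z_c ∧ ⋀_{0 ≤ i < c} Succ(z_{i+1}, z_i)`, the fresh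
variables `z_0, …, z_c` being chosen distinct from `x` and `y`. -/
def diffTrans (pI : ℕ) (r : RelSym) (x y c : ℕ) : Fml :=
  exChain (max x y + 1) c (diffBody pI r x y (max x y + 1) c)

/-- The translation operator `⟦·⟧`: it commutes with all Boolean connectives
and quantifiers, is the identity on predicate and order atoms, maps `x ∈ ℤ`
to `P_INT(x)`, maps `x - y ⋈ c` with `c ≥ 0` to its `Succ`-chain translation,
and first rewrites `x - y ⋈ c` with `c < 0` as `y - x ⋈′ (-c)`. -/
def Fml.translate (pI : ℕ) : Fml → Fml
  | .pred p x => .pred p x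
  | .isInt x => .pred pI x
  | .ord r x y => .ord r x y
  | .diff r x y c =>
      if 0 ≤ c then diffTrans pI r x y c.toNat
      else diffTrans pI r.flip y x (-c).toNat
  | .not φ => .not (φ.translate pI)
  | .and φ ψ => .and (φ.translate pI) (ψ.translate pI)
  | .or φ ψ => .or (φ.translate pI) (ψ.translate pI)
  | .imp φ ψ => .imp (φ.translate pI) (ψ.translate pI)
  | .iff φ ψ => .iff (φ.translate pI) (ψ.translate pI)
  | .all x φ => .all x (φ.translate pI)
  | .ex x φ => .ex x (φ.translate pI)

/-- `AXIOMS_int(P_INT)`: the conjunction of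
`∀x ∃y,z. y < x < z ∧ ∀t. (y < t < z ∧ P_INT(t)) → t = x`,
`∀x ∃y. x < y ∧ P_INT(y) ∧ ∀t. x < t < y → ¬P_INT(t)`, and
`∀x ∃y. y < x ∧ P_INT(y) ∧ ∀t. y < t < x → ¬P_INT(t)`. -/
def axiomsInt (pI : ℕ) : Fml :=
  .and
    (.and
      (.all 0 (.ex 1 (.ex 2 (.and (.and (.ord .lt 1 0) (.ord .lt 0 2))
        (.all 3 (.imp (.and (.and (.ord .lt 1 3) (.ord .lt 3 2)) (.pred pI 3))
          (.ord .eq 3 0)))))))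
      (.all 0 (.ex 1 (.and (.and (.ord .lt 0 1) (.pred pI 1))
        (.all 2 (.imp (.and (.ord .lt 0 2) (.ord .lt 2 1)) (.not (.pred pI 2))))))))
    (.all 0 (.ex 1 (.and (.and (.ord .lt 1 0) (.pred pI 1))
      (.all 2 (.imp (.and (.ord .lt 1 2) (.ord .lt 2 0)) (.not (.pred pI 2)))))))

section Aux

/-- Transfer of comparison along a strictly monotone map. -/
lemma RelSym.interp_map (r : RelSym) {h : ℝ → ℝ} (hm : StrictMono h) (a b : ℝ) :
    r.interp (h a) (h b) ↔ r.interp a b := by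
  cases r <;> simp [RelSym.interp, hm.lt_iff_lt, hm.le_iff_le, hm.injective.eq_iff]

lemma RelSym.interp_flip (r : RelSym) (a b c : ℝ) :
    r.flip.interp (b - a) (-c) ↔ r.interp (a - b) c := by
  cases r <;> simp [RelSym.interp, RelSym.flip] <;> constructor <;> intro <;> linarith

lemma RelSym.interp_shift (r : RelSym) (a b c : ℝ) :
    r.interp (a - b) c ↔ r.interp a (b + c) := by
  cases r <;> simp [RelSym.interp] <;> constructor <;> intro <;> linarith

/-- `Holds` only depends on the predicates occurring in the formula. -/
lemma Fml.holds_agree : ∀ (φ : Fml) (P P' : ℕ → Set ℝ),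
    (∀ p, φ.HasPred p → P p = P' p) → ∀ v, (φ.Holds P v ↔ φ.Holds P' v) := by
  intro φ
  induction φ with
  | pred p x => intro P P' hag v; simp [Fml.Holds, hag p rfl]
  | isInt x => intro P P' hag v; simp [Fml.Holds]
  | ord r x y => intro P P' hag v; simp [Fml.Holds]
  | diff r x y c => intro P P' hag v; simp [Fml.Holds]
  | not φ ih => intro P P' hag v
                exact not_congr (ih P P' hag v)
  | and φ ψ ih1 ih2 =>
      intro P P' hag v
      exact and_congr (ih1 P P' (fun p hp => hag p (Or.inl hp)) v)
        (ih2 P P' (fun p hp => hag p (Or.inr hp)) v)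
  | or φ ψ ih1 ih2 =>
      intro P P' hag v
      exact or_congr (ih1 P P' (fun p hp => hag p (Or.inl hp)) v)
        (ih2 P P' (fun p hp => hag p (Or.inr hp)) v)
  | imp φ ψ ih1 ih2 =>
      intro P P' hag v
      exact imp_congr (ih1 P P' (fun p hp => hag p (Or.inl hp)) v)
        (ih2 P P' (fun p hp => hag p (Or.inr hp)) v)
  | iff φ ψ ih1 ih2 =>
      intro P P' hag v
      exact iff_congr (ih1 P P' (fun p hp => hag p (Or.inl hp)) v)
        (ih2 P P' (fun p hp => hag p (Or.inr hp)) v)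
  | all x φ ih =>
      intro P P' hag v
      exact forall_congr' (fun a => ih P P' hag _)
  | ex x φ ih =>
      intro P P' hag v
      exact exists_congr (fun a => ih P P' hag _)

/-- `Succ(b, a)` semantically. -/
def SuccP (S : Set ℝ) (b a : ℝ) : Prop :=
  b ∈ S ∧ a ∈ S ∧ a < b ∧ ∀ t, a < t → t < b → t ∉ S

lemma succFml_holds (P : ℕ → Set ℝ) (pI u v : ℕ) (w : ℕ → ℝ) :
    (succFml pI u v).Holds P w ↔ SuccP (P pI) (w u) (w v) := by
  have hu : ¬ (u = max u v + 1) := by omega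
  have hv : ¬ (v = max u v + 1) := by omega
  simp [succFml, Fml.Holds, RelSym.interp, SuccP, Function.update_apply, hu, hv]
  tauto

end Aux
section Aux2

lemma foldr_and_holds (F : ℕ → Fml) (t : Fml) (P : ℕ → Set ℝ) (w : ℕ → ℝ) :
    ∀ (l : List ℕ),
    ((l.foldr (fun i acc => .and (F i) acc) t).Holds P w ↔
      (∀ i ∈ l, (F i).Holds P w) ∧ t.Holds P w) := by
  intro l
  induction l with
  | nil => simp
  | cons a l ih => simp [Fml.Holds, ih]; tauto

lemma diffBody_holds (P : ℕ → Set ℝ) (pI : ℕ) (r : RelSym) (x y base c : ℕ) (w : ℕ → ℝ) :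
    (diffBody pI r x y base c).Holds P w ↔
      (∀ i < c, SuccP (P pI) (w (base + i + 1)) (w (base + i))) ∧
        w y = w base ∧ r.interp (w x) (w (base + c)) := by
  rw [diffBody, foldr_and_holds]
  apply and_congr
  · simp only [List.mem_range]
    exact forall_congr' fun i => forall_congr' fun _ => succFml_holds P pI _ _ w
  · simp only [Fml.Holds, RelSym.interp]

/-- Valuation updating the block `base, …, base + c` according to `g`. -/
noncomputable def updF (base c : ℕ) (g : ℕ → ℝ) (w : ℕ → ℝ) : ℕ → ℝ :=
  fun k => if base ≤ k ∧ k ≤ base + c then g (k - base) else w k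

lemma exChain_holds (P : ℕ → Set ℝ) :
    ∀ (c base : ℕ) (body : Fml) (w : ℕ → ℝ),
    (exChain base c body).Holds P w ↔ ∃ g : ℕ → ℝ, body.Holds P (updF base c g w) := by
  intro c
  induction c with
  | zero =>
      intro base body w
      have hupd : ∀ g : ℕ → ℝ, updF base 0 g w = Function.update w base (g 0) := by
        intro g
        funext k
        simp only [updF, Function.update_apply]
        split_ifs with h1 h2
        · have hk0 : k - base = 0 := by omega
          rw [hk0]
        · omega
        · omega
        · rfl
      have : exChain base 0 body = .ex base body := by
        simp [exChain, List.range_succ]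
      rw [this]
      simp only [Fml.Holds]
      constructor
      · rintro ⟨a, ha⟩
        exact ⟨fun _ => a, by rw [hupd]; exact ha⟩
      · rintro ⟨g, hg⟩
        exact ⟨g 0, by rw [hupd] at hg; exact hg⟩
  | succ c ih =>
      intro base body w
      have hstruct : exChain base (c + 1) body
          = exChain base c (.ex (base + (c + 1)) body) := by
        rw [exChain, exChain, List.range_succ, List.foldr_append]
        simp
      rw [hstruct, ih]
      constructor
      · rintro ⟨g, hg⟩
        simp only [Fml.Holds] at hg
        obtain ⟨a, ha⟩ := hg
        refine ⟨fun i => if i = c + 1 then a else g i, ?_⟩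
        convert ha using 1
        funext k
        simp only [updF, Function.update_apply]
        by_cases hk : k = base + (c + 1)
        · have h1 : base ≤ k ∧ k ≤ base + (c + 1) := by omega
          have h2 : k - base = c + 1 := by omega
          simp [hk, h1, h2]
        · by_cases h1 : base ≤ k ∧ k ≤ base + (c + 1)
          · have h2 : base ≤ k ∧ k ≤ base + c := by omega
            have h3 : ¬ (k - base = c + 1) := by omega
            simp [hk, h1, h2, h3]
          · have h2 : ¬ (base ≤ k ∧ k ≤ base + c) := by omega
            simp [hk, h1, h2]
      · rintro ⟨g, hg⟩
        refine ⟨g, ?_⟩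
        simp only [Fml.Holds]
        refine ⟨g (c + 1), ?_⟩
        convert hg using 1
        funext k
        simp only [updF, Function.update_apply]
        by_cases hk : k = base + (c + 1)
        · have h2 : k - base = c + 1 := by omega
          have h1 : base ≤ k ∧ k ≤ base + (c + 1) := by omega
          simp [hk, h1, h2]
        · by_cases h1 : base ≤ k ∧ k ≤ base + (c + 1)
          · have h2 : base ≤ k ∧ k ≤ base + c := by omega
            simp [hk, h1, h2]
          · have h2 : ¬ (base ≤ k ∧ k ≤ base + c) := by omega
            simp [hk, h1, h2]

end Aux2
section Aux3

variable {S : Set ℝ} {h : ℝ → ℝ}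

lemma succP_iff (hm : StrictMono h) (hs : Function.Surjective h)
    (hS : ∀ a, a ∈ S ↔ ∃ k : ℤ, h a = (k : ℝ)) (b a : ℝ) :
    SuccP S b a ↔ (∃ k : ℤ, h a = (k : ℝ)) ∧ h b = h a + 1 := by
  constructor
  · rintro ⟨hbS, haS, hab, hgap⟩
    obtain ⟨ka, hka⟩ := (hS a).1 haS
    obtain ⟨kb, hkb⟩ := (hS b).1 hbS
    refine ⟨⟨ka, hka⟩, ?_⟩
    have hlt : ka < kb := by
      have := hm hab
      rw [hka, hkb] at this
      exact_mod_cast this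
    rcases lt_or_ge kb (ka + 2) with hle | hgt
    · have : kb = ka + 1 := by omega
      rw [hkb, hka, this]; push_cast; ring
    · exfalso
      obtain ⟨t, ht⟩ := hs ((ka : ℝ) + 1)
      have h1 : a < t := by
        have : h a < h t := by rw [hka, ht]; linarith
        exact hm.lt_iff_lt.1 this
      have h2 : t < b := by
        have : h t < h b := by
          rw [hkb, ht]
          have : (ka : ℝ) + 2 ≤ (kb : ℝ) := by exact_mod_cast hgt
          linarith
        exact hm.lt_iff_lt.1 this
      exact hgap t h1 h2 ((hS t).2 ⟨ka + 1, by rw [ht]; push_cast; ring⟩)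
  · rintro ⟨⟨ka, hka⟩, hb⟩
    have hbS : b ∈ S := (hS b).2 ⟨ka + 1, by rw [hb, hka]; push_cast; ring⟩
    have haS : a ∈ S := (hS a).2 ⟨ka, hka⟩
    have hab : a < b := hm.lt_iff_lt.1 (by rw [hb]; linarith)
    refine ⟨hbS, haS, hab, ?_⟩
    intro t h1 h2 htS
    obtain ⟨kt, hkt⟩ := (hS t).1 htS
    have l1 : (ka : ℝ) < kt := by rw [← hka, ← hkt]; exact hm h1
    have l2 : (kt : ℝ) < ka + 1 := by
      have := hm h2
      rw [hkt, hb, hka] at this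
      linarith
    have l1' : ka < kt := by exact_mod_cast l1
    have l2' : kt < ka + 1 := by exact_mod_cast l2
    omega

lemma diffTrans_iff (P : ℕ → Set ℝ) (pI : ℕ)
    (hm : StrictMono h) (hs : Function.Surjective h)
    (hS : ∀ a, a ∈ P pI ↔ ∃ k : ℤ, h a = (k : ℝ))
    (r : RelSym) (x y c : ℕ) (w : ℕ → ℝ) (hy : ∃ k : ℤ, h (w y) = (k : ℝ)) :
    (diffTrans pI r x y c).Holds P w ↔ r.interp (h (w x) - h (w y)) (c : ℝ) := by
  have hxb : ¬ (max x y + 1 ≤ x ∧ x ≤ max x y + 1 + c) := by omega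
  have hyb : ¬ (max x y + 1 ≤ y ∧ y ≤ max x y + 1 + c) := by omega
  have hub : ∀ (g : ℕ → ℝ) (i : ℕ), i ≤ c → updF (max x y + 1) c g w (max x y + 1 + i) = g i := by
    intro g i hi
    have h1 : max x y + 1 ≤ max x y + 1 + i ∧ max x y + 1 + i ≤ max x y + 1 + c := by omega
    have h2 : max x y + 1 + i - (max x y + 1) = i := by omega
    simp [updF, h1, h2]
  have hub1 : ∀ (g : ℕ → ℝ) (i : ℕ), i < c →
      updF (max x y + 1) c g w (max x y + 1 + i + 1) = g (i + 1) :=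
    fun g i hi => hub g (i + 1) (by omega)
  have hub0 : ∀ (g : ℕ → ℝ), updF (max x y + 1) c g w (max x y + 1) = g 0 :=
    fun g => hub g 0 (by omega)
  have hux : ∀ g : ℕ → ℝ, updF (max x y + 1) c g w x = w x := fun g => by simp [updF, hxb]
  have huy : ∀ g : ℕ → ℝ, updF (max x y + 1) c g w y = w y := fun g => by simp [updF, hyb]
  have main : (diffTrans pI r x y c).Holds P w ↔
      ∃ g : ℕ → ℝ, (∀ i < c, SuccP (P pI) (g (i + 1)) (g i)) ∧
        w y = g 0 ∧ r.interp (w x) (g c) := by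
    rw [diffTrans, exChain_holds]
    apply exists_congr; intro g
    rw [diffBody_holds]
    rw [hux, huy, hub g c le_rfl, hub0 g]
    apply and_congr _ Iff.rfl
    apply forall_congr'; intro i
    apply forall_congr'; intro hic
    rw [hub1 g i hic, hub g i (by omega)]
  rw [main, RelSym.interp_shift]
  constructor
  · rintro ⟨g, hchain, hy0, hr⟩
    have key : ∀ i, i ≤ c → h (g i) = h (w y) + i := by
      intro i
      induction i with
      | zero => intro _; rw [← hy0]; simp
      | succ i ih =>
          intro hic
          have hsp := hchain i (by omega)
          rw [succP_iff hm hs hS] at hsp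
          rw [hsp.2, ih (by omega)]
          push_cast; ring
    rw [← key c le_rfl]
    exact (r.interp_map hm _ _).2 hr
  · intro hr
    obtain ⟨ky, hky⟩ := hy
    refine ⟨fun i => Classical.choose (hs (h (w y) + i)), ?_, ?_, ?_⟩
    · intro i hic
      rw [succP_iff hm hs hS]
      have hgi : ∀ j : ℕ, h (Classical.choose (hs (h (w y) + (j : ℝ)))) = h (w y) + j :=
        fun j => Classical.choose_spec (hs (h (w y) + j))
      constructor
      · exact ⟨ky + i, by rw [hgi i, hky]; push_cast; ring⟩
      · rw [hgi (i + 1), hgi i]; push_cast; ring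
    · have h0 : h (Classical.choose (hs (h (w y) + ((0 : ℕ) : ℝ)))) = h (w y) := by
        rw [Classical.choose_spec (hs (h (w y) + ((0 : ℕ) : ℝ)))]; simp
      exact (hm.injective h0).symm
    · have hc : h (Classical.choose (hs (h (w y) + ((c : ℕ) : ℝ)))) = h (w y) + c :=
        Classical.choose_spec (hs (h (w y) + (c : ℝ)))
      rw [← hc] at hr
      exact (r.interp_map hm _ _).1 hr

end Aux3
section Aux4

variable {h : ℝ → ℝ}

lemma update_comp (hm : StrictMono h) (w : ℕ → ℝ) (x : ℕ) (a : ℝ) :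
    (fun i => h (Function.update w x a i)) = Function.update (fun i => h (w i)) x (h a) := by
  funext i
  by_cases hi : i = x <;> simp [Function.update_apply, hi]

lemma castToNat {d : ℤ} (hd : 0 ≤ d) : ((d.toNat : ℕ) : ℝ) = (d : ℝ) := by
  exact_mod_cast Int.toNat_of_nonneg hd

lemma castToNatNeg {d : ℤ} (hd : ¬ 0 ≤ d) : (((-d).toNat : ℕ) : ℝ) = -(d : ℝ) := by
  have : (((-d).toNat : ℕ) : ℝ) = ((-d : ℤ) : ℝ) := by
    exact_mod_cast Int.toNat_of_nonneg (by omega : (0:ℤ) ≤ -d)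
  rw [this]; push_cast; ring

/-- The main transfer lemma. -/
lemma transfer (P : ℕ → Set ℝ) (pI : ℕ)
    (hm : StrictMono h) (hs : Function.Surjective h)
    (hS : ∀ a, a ∈ P pI ↔ ∃ k : ℤ, h a = (k : ℝ)) :
    ∀ {φ : Fml}, IsLMIX φ → ∀ w : ℕ → ℝ,
      ((φ.translate pI).Holds P w ↔ φ.Holds (fun p => h '' P p) (fun i => h (w i))) := by
  intro φ hφ
  induction hφ with
  | pred p x =>
      intro w
      simp [Fml.translate, Fml.Holds, hm.injective.mem_set_image]
  | isInt x =>
      intro w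
      simp only [Fml.translate, Fml.Holds]
      exact hS (w x)
  | ord r x y =>
      intro w
      simp only [Fml.translate, Fml.Holds]
      exact (r.interp_map hm _ _).symm
  | guardAnd r x y c =>
      intro w
      simp only [Fml.translate, Fml.Holds]
      have hx : w x ∈ P pI ↔ ∃ k : ℤ, h (w x) = (k : ℝ) := hS (w x)
      have hy : w y ∈ P pI ↔ ∃ k : ℤ, h (w y) = (k : ℝ) := hS (w y)
      constructor
      · rintro ⟨⟨h1, h2⟩, h3⟩
        refine ⟨⟨hx.1 h1, hy.1 h2⟩, ?_⟩
        by_cases hc : 0 ≤ c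
        · rw [if_pos hc] at h3
          have := (diffTrans_iff P pI hm hs hS r x y c.toNat w (hy.1 h2)).1 h3
          rwa [castToNat hc] at this
        · rw [if_neg hc] at h3
          have := (diffTrans_iff P pI hm hs hS r.flip y x (-c).toNat w (hx.1 h1)).1 h3
          rw [castToNatNeg hc] at this
          rwa [RelSym.interp_flip] at this
      · rintro ⟨⟨h1, h2⟩, h3⟩
        refine ⟨⟨hx.2 h1, hy.2 h2⟩, ?_⟩
        by_cases hc : 0 ≤ c
        · rw [if_pos hc]
          rw [diffTrans_iff P pI hm hs hS r x y c.toNat w h2]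
          rwa [castToNat hc]
        · rw [if_neg hc]
          rw [diffTrans_iff P pI hm hs hS r.flip y x (-c).toNat w h1]
          rw [castToNatNeg hc]
          rwa [RelSym.interp_flip]
  | guardImp r x y c =>
      intro w
      simp only [Fml.translate, Fml.Holds]
      have hx : w x ∈ P pI ↔ ∃ k : ℤ, h (w x) = (k : ℝ) := hS (w x)
      have hy : w y ∈ P pI ↔ ∃ k : ℤ, h (w y) = (k : ℝ) := hS (w y)
      constructor
      · rintro h3 ⟨h1, h2⟩
        have hd := h3 ⟨hx.2 h1, hy.2 h2⟩
        by_cases hc : 0 ≤ c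
        · rw [if_pos hc] at hd
          have := (diffTrans_iff P pI hm hs hS r x y c.toNat w h2).1 hd
          rwa [castToNat hc] at this
        · rw [if_neg hc] at hd
          have := (diffTrans_iff P pI hm hs hS r.flip y x (-c).toNat w h1).1 hd
          rw [castToNatNeg hc] at this
          rwa [RelSym.interp_flip] at this
      · rintro h3 ⟨h1, h2⟩
        have hd := h3 ⟨hx.1 h1, hy.1 h2⟩
        by_cases hc : 0 ≤ c
        · rw [if_pos hc]
          rw [diffTrans_iff P pI hm hs hS r x y c.toNat w (hy.1 h2)]
          rwa [castToNat hc]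
        · rw [if_neg hc]
          rw [diffTrans_iff P pI hm hs hS r.flip y x (-c).toNat w (hx.1 h1)]
          rw [castToNatNeg hc]
          rwa [RelSym.interp_flip]
  | not _ ih =>
      intro w
      simp only [Fml.translate, Fml.Holds]
      exact not_congr (ih w)
  | and _ _ ih1 ih2 =>
      intro w
      simp only [Fml.translate, Fml.Holds]
      exact and_congr (ih1 w) (ih2 w)
  | or _ _ ih1 ih2 =>
      intro w
      simp only [Fml.translate, Fml.Holds]
      exact or_congr (ih1 w) (ih2 w)
  | imp _ _ ih1 ih2 =>
      intro w
      simp only [Fml.translate, Fml.Holds]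
      exact imp_congr (ih1 w) (ih2 w)
  | iff _ _ ih1 ih2 =>
      intro w
      simp only [Fml.translate, Fml.Holds]
      exact iff_congr (ih1 w) (ih2 w)
  | @all x φ _ ih =>
      intro w
      simp only [Fml.translate, Fml.Holds]
      constructor
      · intro hall b
        obtain ⟨a, rfl⟩ := hs b
        have := (ih (Function.update w x a)).1 (hall a)
        rwa [update_comp hm] at this
      · intro hall a
        have := hall (h a)
        rw [← update_comp hm] at this
        exact (ih (Function.update w x a)).2 this
  | @ex x φ _ ih =>
      intro w
      simp only [Fml.translate, Fml.Holds]
      constructor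
      · rintro ⟨a, ha⟩
        refine ⟨h a, ?_⟩
        rw [← update_comp hm]
        exact (ih (Function.update w x a)).1 ha
      · rintro ⟨b, hb⟩
        obtain ⟨a, rfl⟩ := hs b
        rw [← update_comp hm] at hb
        exact ⟨a, (ih (Function.update w x a)).2 hb⟩

end Aux4
section Aux5

lemma axiomsInt_iff (P : ℕ → Set ℝ) (pI : ℕ) (v : ℕ → ℝ) :
    (axiomsInt pI).Holds P v ↔
      ((∀ x : ℝ, ∃ y z : ℝ, y < x ∧ x < z ∧ ∀ t, y < t → t < z → t ∈ P pI → t = x) ∧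
       (∀ x : ℝ, ∃ y : ℝ, x < y ∧ y ∈ P pI ∧ ∀ t, x < t → t < y → t ∉ P pI) ∧
       (∀ x : ℝ, ∃ y : ℝ, y < x ∧ y ∈ P pI ∧ ∀ t, y < t → t < x → t ∉ P pI)) := by
  simp only [axiomsInt, Fml.Holds, RelSym.interp, Function.update_apply]
  norm_num
  constructor
  · rintro ⟨⟨h1, h2⟩, h3⟩
    refine ⟨fun x => ?_, fun x => ?_, fun x => ?_⟩
    · obtain ⟨y, z, ⟨hy, hz⟩, hu⟩ := h1 x; exact ⟨y, hy, z, hz, hu⟩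
    · obtain ⟨y, ⟨hy, hyS⟩, hu⟩ := h2 x; exact ⟨y, hy, hyS, hu⟩
    · obtain ⟨y, ⟨hy, hyS⟩, hu⟩ := h3 x; exact ⟨y, hy, hyS, hu⟩
  · rintro ⟨h1, h2, h3⟩
    refine ⟨⟨fun x => ?_, fun x => ?_⟩, fun x => ?_⟩
    · obtain ⟨y, hy, z, hz, hu⟩ := h1 x; exact ⟨y, z, ⟨hy, hz⟩, hu⟩
    · obtain ⟨y, hy, hyS, hu⟩ := h2 x; exact ⟨y, ⟨hy, hyS⟩, hu⟩
    · obtain ⟨y, hy, hyS, hu⟩ := h3 x; exact ⟨y, ⟨hy, hyS⟩, hu⟩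

/-- The set of integer reals satisfies the three axioms. -/
lemma int_axioms :
    (∀ x : ℝ, ∃ y z : ℝ, y < x ∧ x < z ∧
        ∀ t, y < t → t < z → (∃ k : ℤ, t = (k:ℝ)) → t = x) ∧
    (∀ x : ℝ, ∃ y : ℝ, x < y ∧ (∃ k : ℤ, y = (k:ℝ)) ∧
        ∀ t, x < t → t < y → ¬ (∃ k : ℤ, t = (k:ℝ))) ∧
    (∀ x : ℝ, ∃ y : ℝ, y < x ∧ (∃ k : ℤ, y = (k:ℝ)) ∧
        ∀ t, y < t → t < x → ¬ (∃ k : ℤ, t = (k:ℝ))) := by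
  refine ⟨?_, ?_, ?_⟩
  · intro x
    refine ⟨(⌈x⌉ : ℝ) - 1, (⌊x⌋ : ℝ) + 1, by
      have := Int.ceil_lt_add_one x; linarith, by
      have := Int.lt_floor_add_one x; linarith, ?_⟩
    rintro t h1 h2 ⟨k, rfl⟩
    have hk1 : ⌈x⌉ ≤ k := by
      have : (⌈x⌉ : ℝ) - 1 < (k : ℝ) := h1
      have : (⌈x⌉ : ℝ) < (k : ℝ) + 1 := by linarith
      have : ⌈x⌉ < k + 1 := by exact_mod_cast this
      omega
    have hk2 : k ≤ ⌊x⌋ := by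
      have : (k : ℝ) < (⌊x⌋ : ℝ) + 1 := h2
      have : k < ⌊x⌋ + 1 := by exact_mod_cast this
      omega
    have l1 : x ≤ (k : ℝ) := Int.ceil_le.mp hk1
    have l2 : (k : ℝ) ≤ x := Int.le_floor.mp hk2
    linarith
  · intro x
    refine ⟨(⌊x⌋ : ℝ) + 1, by have := Int.lt_floor_add_one x; linarith,
      ⟨⌊x⌋ + 1, by push_cast; ring⟩, ?_⟩
    rintro t h1 h2 ⟨k, rfl⟩
    have hk : k ≤ ⌊x⌋ := by
      have : k < ⌊x⌋ + 1 := by exact_mod_cast h2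
      omega
    have : (k : ℝ) ≤ x := Int.le_floor.mp hk
    linarith
  · intro x
    refine ⟨(⌈x⌉ : ℝ) - 1, by have := Int.ceil_lt_add_one x; linarith,
      ⟨⌈x⌉ - 1, by push_cast; ring⟩, ?_⟩
    rintro t h1 h2 ⟨k, rfl⟩
    have hk : ⌈x⌉ ≤ k := by
      have : (⌈x⌉ : ℝ) < (k : ℝ) + 1 := by linarith
      have : ⌈x⌉ < k + 1 := by exact_mod_cast this
      omega
    have : x ≤ (k : ℝ) := Int.ceil_le.mp hk
    linarith

end Aux5
section Aux6

/-- From the three axioms on a set `S ⊆ ℝ`, construct a strictly monotone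
surjection `ℝ → ℝ` mapping `S` exactly onto the integers. -/
lemma exists_iso {S : Set ℝ}
    (ax1 : ∀ x : ℝ, ∃ y z : ℝ, y < x ∧ x < z ∧ ∀ t, y < t → t < z → t ∈ S → t = x)
    (ax2 : ∀ x : ℝ, ∃ y : ℝ, x < y ∧ y ∈ S ∧ ∀ t, x < t → t < y → t ∉ S)
    (ax3 : ∀ x : ℝ, ∃ y : ℝ, y < x ∧ y ∈ S ∧ ∀ t, y < t → t < x → t ∉ S) :
    ∃ h : ℝ → ℝ, StrictMono h ∧ Function.Surjective h ∧
      ∀ a, (a ∈ S ↔ ∃ k : ℤ, h a = (k : ℝ)) := by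
  classical
  -- successor and predecessor functions
  set nx : ℝ → ℝ := fun x => (ax2 x).choose with hnx
  have nx_gt : ∀ x, x < nx x := fun x => (ax2 x).choose_spec.1
  have nx_mem : ∀ x, nx x ∈ S := fun x => (ax2 x).choose_spec.2.1
  have nx_gap : ∀ x t, x < t → t < nx x → t ∉ S := fun x => (ax2 x).choose_spec.2.2
  set px : ℝ → ℝ := fun x => (ax3 x).choose with hpx
  have px_lt : ∀ x, px x < x := fun x => (ax3 x).choose_spec.1
  have px_mem : ∀ x, px x ∈ S := fun x => (ax3 x).choose_spec.2.1
  have px_gap : ∀ x t, px x < t → t < x → t ∉ S := fun x => (ax3 x).choose_spec.2.2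
  have nx_px : ∀ x ∈ S, nx (px x) = x := by
    intro x hx
    rcases lt_trichotomy (nx (px x)) x with hlt | heq | hgt
    · exact absurd (nx_mem (px x)) (px_gap x _ (nx_gt (px x)) hlt)
    · exact heq
    · exact absurd hx (nx_gap (px x) x (px_lt x) hgt)
  have nxit_mem : ∀ m : ℕ, nx^[m] (nx 0) ∈ S := by
    intro m
    cases m with
    | zero => exact nx_mem 0
    | succ m => rw [Function.iterate_succ_apply']; exact nx_mem _
  have pxit_mem : ∀ m : ℕ, px^[m] (nx 0) ∈ S := by
    intro m
    cases m with
    | zero => exact nx_mem 0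
    | succ m => rw [Function.iterate_succ_apply']; exact px_mem _
  -- the bi-infinite chain
  set f : ℤ → ℝ := fun n => if 0 ≤ n then nx^[n.toNat] (nx 0) else px^[(-n).toNat] (nx 0)
    with hf
  have f_mem : ∀ n : ℤ, f n ∈ S := by
    intro n
    simp only [hf]
    by_cases hn : 0 ≤ n
    · rw [if_pos hn]; exact nxit_mem _
    · rw [if_neg hn]; exact pxit_mem _
  have f_step : ∀ n : ℤ, f (n + 1) = nx (f n) := by
    intro n
    simp only [hf]
    by_cases hn : 0 ≤ n
    · have hn1 : (0:ℤ) ≤ n + 1 := by omega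
      simp only [if_pos hn1, if_pos hn]
      have : (n + 1).toNat = n.toNat + 1 := by omega
      rw [this, Function.iterate_succ_apply']
    · by_cases hn1 : n = -1
      · subst hn1
        norm_num
        exact (nx_px (nx 0) (nx_mem 0)).symm
      · have h1 : ¬ (0:ℤ) ≤ n + 1 := by omega
        simp only [if_neg h1, if_neg hn]
        have : (-n).toNat = (-(n+1)).toNat + 1 := by omega
        rw [this, Function.iterate_succ_apply']
        exact (nx_px _ (pxit_mem _)).symm
  have f_lt : ∀ n : ℤ, f n < f (n + 1) := by
    intro n; rw [f_step n]; exact nx_gt (f n)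
  have f_mono : StrictMono f := strictMono_int_of_lt_succ f_lt
  have f_gap : ∀ (n : ℤ) (t : ℝ), f n < t → t < f (n + 1) → t ∉ S := by
    intro n t h1 h2
    rw [f_step n] at h2
    exact nx_gap (f n) t h1 h2
  -- unboundedness above
  have f_up : ∀ x : ℝ, ∃ n : ℤ, x < f n := by
    by_contra hcon
    push_neg at hcon
    obtain ⟨x, hall⟩ := hcon
    set T : Set ℝ := Set.range (fun m : ℕ => f (m : ℤ)) with hT
    have hTne : T.Nonempty := ⟨f 0, ⟨0, rfl⟩⟩
    have hTbdd : BddAbove T := ⟨x, by rintro _ ⟨m, rfl⟩; exact hall _⟩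
    set s := sSup T with hs
    obtain ⟨y, z, hy, hz, hu⟩ := ax1 s
    obtain ⟨b, ⟨m, rfl⟩, hb⟩ := exists_lt_of_lt_csSup hTne hy
    have h1 : f (m : ℤ) ≤ s := le_csSup hTbdd ⟨m, rfl⟩
    have h2 : f ((m : ℤ) + 1) ≤ s := le_csSup hTbdd ⟨m + 1, by push_cast; rfl⟩
    have e1 : f (m : ℤ) = s := hu _ hb (lt_of_le_of_lt h1 hz) (f_mem _)
    have e2 : f ((m : ℤ) + 1) = s :=
      hu _ (lt_of_lt_of_le hb (le_of_lt (f_lt _))) (lt_of_le_of_lt h2 hz) (f_mem _)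
    have := f_lt (m : ℤ)
    rw [e1, e2] at this
    exact lt_irrefl s this
  -- unboundedness below
  have f_down : ∀ x : ℝ, ∃ n : ℤ, f n < x := by
    by_contra hcon
    push_neg at hcon
    obtain ⟨x, hall⟩ := hcon
    set T : Set ℝ := Set.range (fun m : ℕ => f (-(m : ℤ))) with hT
    have hTne : T.Nonempty := ⟨f (-(0:ℕ):ℤ), ⟨0, rfl⟩⟩
    have hTbdd : BddBelow T := ⟨x, by rintro _ ⟨m, rfl⟩; exact hall _⟩
    set s := sInf T with hs
    obtain ⟨y, z, hy, hz, hu⟩ := ax1 s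
    obtain ⟨b, ⟨m, rfl⟩, hb⟩ := exists_lt_of_csInf_lt hTne hz
    have h1 : s ≤ f (-(m : ℤ)) := csInf_le hTbdd ⟨m, rfl⟩
    have h2 : s ≤ f (-((m : ℤ) + 1)) := csInf_le hTbdd ⟨m + 1, by push_cast; rfl⟩
    have hlt : f (-((m:ℤ) + 1)) < f (-(m:ℤ)) := f_mono (by omega)
    have e1 : f (-(m : ℤ)) = s := hu _ (lt_of_lt_of_le hy h1) hb (f_mem _)
    have e2 : f (-((m : ℤ) + 1)) = s :=
      hu _ (lt_of_lt_of_le hy h2) (lt_trans hlt hb) (f_mem _)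
    rw [e1, e2] at hlt
    exact lt_irrefl s hlt
  -- every element of S is in the range of f
  have f_surjS : ∀ s ∈ S, ∃ n : ℤ, f n = s := by
    intro s hsS
    obtain ⟨M, hM⟩ := f_up s
    have Hbdd : ∃ b : ℤ, ∀ z : ℤ, f z < s → z ≤ b := by
      refine ⟨M, fun z hz => ?_⟩
      have : f z < f M := lt_trans hz hM
      exact le_of_lt (f_mono.lt_iff_lt.1 this)
    obtain ⟨N, hN1, hN2⟩ := Int.exists_greatest_of_bdd Hbdd (f_down s)
    have hge : s ≤ f (N + 1) := by
      by_contra hcon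
      push_neg at hcon
      have := hN2 (N + 1) hcon
      omega
    rcases eq_or_lt_of_le hge with heq | hlt
    · exact ⟨N + 1, heq.symm⟩
    · exact absurd hsS (f_gap N s hN1 hlt)
  -- the "floor" function relative to f
  have hNex : ∀ x : ℝ, ∃ N : ℤ, (f N ≤ x ∧ x < f (N + 1)) ∧ ∀ z : ℤ, f z ≤ x → z ≤ N := by
    intro x
    obtain ⟨M, hM⟩ := f_up x
    have Hbdd : ∃ b : ℤ, ∀ z : ℤ, f z ≤ x → z ≤ b := by
      refine ⟨M, fun z hz => ?_⟩
      have : f z < f M := lt_of_le_of_lt hz hM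
      exact le_of_lt (f_mono.lt_iff_lt.1 this)
    have Hinh : ∃ z : ℤ, f z ≤ x := by
      obtain ⟨n, hn⟩ := f_down x
      exact ⟨n, le_of_lt hn⟩
    obtain ⟨N, hN1, hN2⟩ := Int.exists_greatest_of_bdd Hbdd Hinh
    refine ⟨N, ⟨hN1, ?_⟩, hN2⟩
    by_contra hcon
    push_neg at hcon
    have := hN2 (N + 1) hcon
    omega
  set Nf : ℝ → ℤ := fun x => (hNex x).choose with hNf
  have Nf_le : ∀ x, f (Nf x) ≤ x := fun x => (hNex x).choose_spec.1.1
  have Nf_lt : ∀ x, x < f (Nf x + 1) := fun x => (hNex x).choose_spec.1.2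
  have Nf_max : ∀ x (z : ℤ), f z ≤ x → z ≤ Nf x := fun x => (hNex x).choose_spec.2
  have Nf_eq : ∀ (x : ℝ) (n : ℤ), f n ≤ x → x < f (n + 1) → Nf x = n := by
    intro x n h1 h2
    have ha : n ≤ Nf x := Nf_max x n h1
    have hb : Nf x ≤ n := by
      have : f (Nf x) < f (n + 1) := lt_of_le_of_lt (Nf_le x) h2
      have := f_mono.lt_iff_lt.1 this
      omega
    omega
  have d_pos : ∀ n : ℤ, 0 < f (n + 1) - f n := fun n => sub_pos.2 (f_lt n)
  -- the order isomorphism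
  set h : ℝ → ℝ := fun x =>
    (Nf x : ℝ) + (x - f (Nf x)) / (f (Nf x + 1) - f (Nf x)) with hh
  have frac_nonneg : ∀ x, 0 ≤ (x - f (Nf x)) / (f (Nf x + 1) - f (Nf x)) :=
    fun x => div_nonneg (sub_nonneg.2 (Nf_le x)) (le_of_lt (d_pos (Nf x)))
  have frac_lt_one : ∀ x, (x - f (Nf x)) / (f (Nf x + 1) - f (Nf x)) < 1 := by
    intro x
    rw [div_lt_one (d_pos (Nf x))]
    have := Nf_lt x
    linarith
  have hmono : StrictMono h := by
    intro a b hab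
    have hNM : Nf a ≤ Nf b := Nf_max b (Nf a) (le_of_lt (lt_of_le_of_lt (Nf_le a) hab))
    rcases eq_or_lt_of_le hNM with heq | hlt
    · simp only [hh]
      rw [← heq]
      have : (a - f (Nf a)) / (f (Nf a + 1) - f (Nf a)) <
          (b - f (Nf a)) / (f (Nf a + 1) - f (Nf a)) := by
        apply (div_lt_div_iff_of_pos_right (d_pos (Nf a))).2
        linarith
      linarith
    · have h1 : h a < (Nf a : ℝ) + 1 := by
        simp only [hh]
        have := frac_lt_one a
        linarith
      have h2 : ((Nf a : ℝ)) + 1 ≤ (Nf b : ℝ) := by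
        have : Nf a + 1 ≤ Nf b := by omega
        exact_mod_cast this
      have h3 : (Nf b : ℝ) ≤ h b := by
        simp only [hh]
        have := frac_nonneg b
        linarith
      linarith
  have hsurj : Function.Surjective h := by
    intro r
    set n : ℤ := ⌊r⌋ with hn
    set t : ℝ := r - n with ht
    have ht0 : 0 ≤ t := by rw [ht]; have := Int.floor_le r; linarith
    have ht1 : t < 1 := by rw [ht]; have := Int.lt_floor_add_one r; linarith
    set x : ℝ := f n + t * (f (n + 1) - f n) with hx
    have hd := d_pos n
    have hfx1 : f n ≤ x := by rw [hx]; nlinarith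
    have hfx2 : x < f (n + 1) := by rw [hx]; nlinarith
    have hNx : Nf x = n := Nf_eq x n hfx1 hfx2
    refine ⟨x, ?_⟩
    simp only [hh]
    rw [hNx]
    have : (x - f n) / (f (n + 1) - f n) = t := by
      rw [hx]
      field_simp
      ring
    rw [this, ht]
    ring
  have hint : ∀ a : ℝ, a ∈ S ↔ ∃ k : ℤ, h a = (k : ℝ) := by
    intro a
    constructor
    · intro haS
      obtain ⟨n, hn⟩ := f_surjS a haS
      have hNa : Nf a = n := by
        apply Nf_eq a n (le_of_eq hn)
        rw [← hn]
        exact f_lt n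
      refine ⟨n, ?_⟩
      simp only [hh]
      rw [hNa, ← hn]
      simp
    · rintro ⟨k, hk⟩
      have h0 := frac_nonneg a
      have h1 := frac_lt_one a
      simp only [hh] at hk
      have hfrac : (a - f (Nf a)) / (f (Nf a + 1) - f (Nf a)) = ((k - Nf a : ℤ) : ℝ) := by
        push_cast
        linarith
      rw [hfrac] at h0 h1
      have hk0 : (0:ℤ) ≤ k - Nf a := by exact_mod_cast h0
      have hk1 : k - Nf a < 1 := by exact_mod_cast h1
      have : k - Nf a = 0 := by omega
      rw [this] at hfrac
      simp only [Int.cast_zero] at hfrac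
      have hnum : a - f (Nf a) = 0 := by
        rcases (div_eq_zero_iff.1 hfrac) with h | h
        · exact h
        · exact absurd h (ne_of_gt (d_pos (Nf a)))
      have : a = f (Nf a) := by linarith
      rw [this]
      exact f_mem _
  exact ⟨h, hmono, hsurj, hint⟩

end Aux6
/-- Every LMIX formula `φ` is equisatisfiable over `ℝ` with the MSO(OR)
formula `AXIOMS_int(P_INT) ∧ ⟦φ⟧`, where `P_INT` is a fresh predicate symbol
not occurring in `φ`. -/
theorem lmix_translation_equisatisfiable
    (φ : Fml) (hφ : IsLMIX φ) (pI : ℕ) (hfresh : ¬ φ.HasPred pI) :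
    φ.Satisfiable ↔ (Fml.and (axiomsInt pI) (φ.translate pI)).Satisfiable := by
  constructor
  · rintro ⟨P, v, hv⟩
    set Q : ℕ → Set ℝ := Function.update P pI {x : ℝ | ∃ k : ℤ, x = (k : ℝ)} with hQ
    have hQpI : Q pI = {x : ℝ | ∃ k : ℤ, x = (k : ℝ)} := by
      rw [hQ]; exact Function.update_self _ _ _
    have hS : ∀ a : ℝ, a ∈ Q pI ↔ ∃ k : ℤ, (fun x : ℝ => x) a = (k : ℝ) := by
      intro a; rw [hQpI]; simp
    have hmono : StrictMono (fun x : ℝ => x) := fun a b hab => hab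
    have hsurj : Function.Surjective (fun x : ℝ => x) := fun b => ⟨b, rfl⟩
    have htr := transfer Q pI hmono hsurj hS hφ v
    have himg : (fun p => (fun x : ℝ => x) '' Q p) = Q := by
      funext p; exact Set.image_id' (Q p)
    have hag : ∀ p, φ.HasPred p → Q p = P p := by
      intro p hp
      have hne : p ≠ pI := fun he => hfresh (he ▸ hp)
      rw [hQ]
      exact Function.update_of_ne hne _ _
    have hQv : φ.Holds Q v := (Fml.holds_agree φ Q P hag v).2 hv
    refine ⟨Q, v, ?_, ?_⟩
    · rw [axiomsInt_iff]
      simp only [hQpI, Set.mem_setOf_eq]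
      exact int_axioms
    · apply htr.mpr
      rw [himg]
      exact hQv
  · rintro ⟨Q, w, hQw⟩
    obtain ⟨hax, htr⟩ := hQw
    rw [axiomsInt_iff] at hax
    obtain ⟨ax1, ax2, ax3⟩ := hax
    obtain ⟨h, hmono, hsurj, hint⟩ := exists_iso ax1 ax2 ax3
    exact ⟨_, _, (transfer Q pI hmono hsurj hint hφ w).1 htr⟩
end

section
/- For every natural number N ≥ 2, there exists a set S ⊆ ℝ satisfying all of the grid axioms A2–A7 (with landmark 0): (A2) 0, 1 and 2 are supporting points of S; (A3) every x < 0 belongs to S; (A4) there exist reals x_1, …, x_N with x_1 = 0, x_N = 1, 0 ≤ x_i < 1 for i < N, and x_{i+1} the supporting successor of x_i for each 1 ≤ i < N; (A5) there exist b_1, b_2 with 1 < b_1 < b_2 < 2 such that every x ∈ (b_1, b_2) has a supporting successor lying in (x, b_2) and a supporting predecessor lying in (b_1, x), and every supporting point in (1, 2) lies in (b_1, b_2); (A6) for every x ∈ (1, 2), x is a supporting point iff x + 1 is a supporting point; (A7) for every x ≥ 0, x is a supporting point iff x + 3 is a supporting point. -/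
/-- `x` is a *supporting point* of `S ⊆ ℝ`: some open interval `(y, x)` to the
left of `x` is contained in `S`, and some open interval `(x, z)` to the right
of `x` is disjoint from `S`. -/
def Supp (S : Set ℝ) (x : ℝ) : Prop :=
  (∃ y : ℝ, y < x ∧ Set.Ioo y x ⊆ S) ∧ (∃ z : ℝ, x < z ∧ ∀ t ∈ Set.Ioo x z, t ∉ S)

/-- `SuppSucc S y x`: `x` is the supporting successor of `y` (equivalently,
`y` is the supporting predecessor of `x`): both are supporting points,
`y < x`, and no supporting point lies strictly between them. -/
def SuppSucc (S : Set ℝ) (y x : ℝ) : Prop :=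
  Supp S y ∧ Supp S x ∧ y < x ∧ ∀ z : ℝ, y < z → z < x → ¬ Supp S z

/-- The grid axioms A2–A7 (with landmark `0` and parameter `N`) for `S ⊆ ℝ`. -/
def GridAxioms (N : ℕ) (S : Set ℝ) : Prop :=
  -- (A2) 0, 1 and 2 are supporting points
  (Supp S 0 ∧ Supp S 1 ∧ Supp S 2) ∧
  -- (A3) every x < 0 belongs to S
  (∀ x : ℝ, x < 0 → x ∈ S) ∧
  -- (A4) a chain x_1 = 0, …, x_N = 1 of consecutive supporting points
  (∃ x : ℕ → ℝ, x 1 = 0 ∧ x N = 1 ∧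
    (∀ i : ℕ, 1 ≤ i → i < N → 0 ≤ x i ∧ x i < 1) ∧
    (∀ i : ℕ, 1 ≤ i → i < N → SuppSucc S (x i) (x (i + 1)))) ∧
  -- (A5) the supporting points in (1,2) all lie in some (b₁,b₂) and every
  -- point of (b₁,b₂) has a supporting successor in (·,b₂) and a supporting
  -- predecessor in (b₁,·)
  (∃ b₁ b₂ : ℝ, 1 < b₁ ∧ b₁ < b₂ ∧ b₂ < 2 ∧
    (∀ x : ℝ, b₁ < x → x < b₂ →
      ∃ y : ℝ, x < y ∧ y < b₂ ∧ Supp S y ∧ ∀ z : ℝ, x < z → z < y → ¬ Supp S z) ∧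
    (∀ x : ℝ, b₁ < x → x < b₂ →
      ∃ y : ℝ, b₁ < y ∧ y < x ∧ Supp S y ∧ ∀ z : ℝ, y < z → z < x → ¬ Supp S z) ∧
    (∀ x : ℝ, 1 < x → x < 2 → Supp S x → b₁ < x ∧ x < b₂)) ∧
  -- (A6) the supporting pattern on (1,2) is repeated on (2,3) with offset 1
  (∀ x : ℝ, 1 < x → x < 2 → (Supp S x ↔ Supp S (x + 1))) ∧
  -- (A7) the supporting pattern on [0,∞) is 3-periodic
  (∀ x : ℝ, 0 ≤ x → (Supp S x ↔ Supp S (x + 3)))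


namespace GridAux

/-! ### Generic helpers about `Supp` -/

lemma supp_intro {S : Set ℝ} {p a b : ℝ} (ha : a < p) (hb : p < b)
    (hon : ∀ v, a < v → v < p → v ∈ S) (hoff : ∀ v, p < v → v < b → v ∉ S) :
    Supp S p :=
  ⟨⟨a, ha, fun v hv => hon v hv.1 hv.2⟩, ⟨b, hb, fun v hv => hoff v hv.1 hv.2⟩⟩

lemma notSupp_left {S : Set ℝ} {p : ℝ}
    (h : ∀ y, y < p → ∃ v, y < v ∧ v < p ∧ v ∉ S) : ¬ Supp S p := by
  rintro ⟨⟨y, hy, hsub⟩, -⟩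
  obtain ⟨v, h1, h2, h3⟩ := h y hy
  exact h3 (hsub ⟨h1, h2⟩)

lemma notSupp_left' {S : Set ℝ} {p a : ℝ} (ha : a < p)
    (h : ∀ v, a < v → v < p → v ∉ S) : ¬ Supp S p := by
  apply notSupp_left
  intro y hy
  have hm : max a y < p := max_lt ha hy
  have h1 := le_max_left a y
  have h2 := le_max_right a y
  exact ⟨(max a y + p) / 2, by linarith, by linarith, h _ (by linarith) (by linarith)⟩

lemma notSupp_right {S : Set ℝ} {p : ℝ}
    (h : ∀ z, p < z → ∃ v, p < v ∧ v < z ∧ v ∈ S) : ¬ Supp S p := by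
  rintro ⟨-, ⟨z, hz, hdis⟩⟩
  obtain ⟨v, h1, h2, h3⟩ := h z hz
  exact hdis v ⟨h1, h2⟩ h3

lemma notSupp_right' {S : Set ℝ} {p b : ℝ} (hb : p < b)
    (h : ∀ v, p < v → v < b → v ∈ S) : ¬ Supp S p := by
  apply notSupp_right
  intro z hz
  have hm : p < min b z := lt_min hb hz
  have h1 := min_le_left b z
  have h2 := min_le_right b z
  exact ⟨(p + min b z) / 2, by linarith, by linarith, h _ (by linarith) (by linarith)⟩

lemma supp_translate {S : Set ℝ} {x c δ : ℝ} (hδ : 0 < δ)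
    (h : ∀ v, x - δ < v → v < x + δ → (v ∈ S ↔ v + c ∈ S)) (hs : Supp S x) :
    Supp S (x + c) := by
  obtain ⟨⟨y, hy, hsub⟩, ⟨z, hz, hdis⟩⟩ := hs
  constructor
  · refine ⟨max y (x - δ/2) + c, ?_, ?_⟩
    · have h1 : max y (x - δ/2) < x := max_lt hy (by linarith)
      linarith
    · rintro w ⟨hw1, hw2⟩
      have hy' := le_max_left y (x - δ/2)
      have hd' := le_max_right y (x - δ/2)
      have hmem : w - c ∈ S := hsub ⟨by linarith, by linarith⟩
      have := (h (w - c) (by linarith) (by linarith)).1 hmem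
      simpa using this
  · refine ⟨min z (x + δ/2) + c, ?_, ?_⟩
    · have h1 : x < min z (x + δ/2) := lt_min hz (by linarith)
      linarith
    · rintro w ⟨hw1, hw2⟩ hwS
      have hz' := min_le_left z (x + δ/2)
      have hd' := min_le_right z (x + δ/2)
      have hmem : w - c ∈ S := (h (w - c) (by linarith) (by linarith)).2 (by simpa using hwS)
      exact hdis (w - c) ⟨by linarith, by linarith⟩ hmem

lemma supp_translate_iff {S : Set ℝ} {x c δ : ℝ} (hδ : 0 < δ)
    (h : ∀ v, x - δ < v → v < x + δ → (v ∈ S ↔ v + c ∈ S)) :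
    Supp S x ↔ Supp S (x + c) := by
  constructor
  · exact supp_translate hδ h
  · intro hs
    have h' : ∀ v, (x + c) - δ < v → v < (x + c) + δ → (v ∈ S ↔ v + (-c) ∈ S) := by
      intro v h1 h2
      have h3 := h (v - c) (by linarith) (by linarith)
      rw [sub_add_cancel] at h3
      rw [show v + -c = v - c by ring]
      exact h3.symm
    have := supp_translate hδ h' hs
    simpa using this

/-! ### The sequence `tt` of supporting points in `(5/4, 7/4)` -/

noncomputable def g (n : ℤ) : ℝ := (n : ℝ) / (1 + |(n : ℝ)|)

lemma g_bounds (n : ℤ) : -1 < g n ∧ g n < 1 := by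
  have h : (0:ℝ) < 1 + |(n:ℝ)| := by positivity
  constructor
  · rw [g, lt_div_iff₀ h]
    have := neg_abs_le (n:ℝ); linarith
  · rw [g, div_lt_one h]
    have := le_abs_self (n:ℝ); linarith

lemma g_mono {a b : ℤ} (h : a < b) : g a < g b := by
  have hA : (0:ℝ) < 1 + |(a:ℝ)| := by positivity
  have hB : (0:ℝ) < 1 + |(b:ℝ)| := by positivity
  have hab : (a:ℝ) < (b:ℝ) := by exact_mod_cast h
  rw [g, g, div_lt_div_iff₀ hA hB]
  rcases abs_cases (a:ℝ) with ⟨h1, h1'⟩ | ⟨h1, h1'⟩ <;>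
    rcases abs_cases (b:ℝ) with ⟨h2, h2'⟩ | ⟨h2, h2'⟩ <;>
      rw [h1, h2] <;> nlinarith

lemma g_dense_up (c : ℝ) (hc : c < 1) : ∃ n : ℤ, c < g n := by
  obtain ⟨k, hk⟩ := exists_nat_gt (1 / (1 - c))
  refine ⟨(k:ℤ), ?_⟩
  have hk0 : (0:ℝ) ≤ (k:ℝ) := Nat.cast_nonneg k
  have h1 : (0:ℝ) < 1 - c := by linarith
  have h2 : 1 < (k:ℝ) * (1 - c) := by
    rw [div_lt_iff₀ h1] at hk; linarith
  rw [g]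
  push_cast
  rw [abs_of_nonneg hk0, lt_div_iff₀ (by linarith)]
  nlinarith

lemma g_dense_down (c : ℝ) (hc : -1 < c) : ∃ n : ℤ, g n < c := by
  obtain ⟨n, hn⟩ := g_dense_up (-c) (by linarith)
  refine ⟨-n, ?_⟩
  have hneg : g (-n) = - g n := by
    rw [g, g]; push_cast; rw [abs_neg]; ring
  rw [hneg]; linarith

noncomputable def tt (n : ℤ) : ℝ := 3/2 + g n / 4

lemma tt_lb (n : ℤ) : 5/4 < tt n := by have := (g_bounds n).1; rw [tt]; linarith

lemma tt_ub (n : ℤ) : tt n < 7/4 := by have := (g_bounds n).2; rw [tt]; linarith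

lemma tt_mono {a b : ℤ} (h : a < b) : tt a < tt b := by
  have := g_mono h; rw [tt, tt]; linarith

lemma tt_mono_le {a b : ℤ} (h : a ≤ b) : tt a ≤ tt b := by
  rcases h.lt_or_eq with h | h
  · exact (tt_mono h).le
  · rw [h]

noncomputable def mid (n : ℤ) : ℝ := (tt n + tt (n + 1)) / 2

lemma tt_lt_mid (n : ℤ) : tt n < mid n := by
  have := tt_mono (show n < n + 1 by omega); rw [mid]; linarith

lemma mid_lt_tt (n : ℤ) : mid n < tt (n + 1) := by
  have := tt_mono (show n < n + 1 by omega); rw [mid]; linarith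

lemma mid_mono {a b : ℤ} (h : a ≤ b) : mid a ≤ mid b := by
  have h1 := tt_mono_le h
  have h2 := tt_mono_le (show a + 1 ≤ b + 1 by omega)
  rw [mid, mid]; linarith

lemma tt_dense (y : ℝ) (hy : y < 7/4) : ∃ n : ℤ, y < tt n := by
  obtain ⟨n, hn⟩ := g_dense_up (4 * (y - 3/2)) (by linarith)
  exact ⟨n, by rw [tt]; linarith⟩

lemma tt_dense_down (y : ℝ) (hy : 5/4 < y) : ∃ n : ℤ, tt n < y := by
  obtain ⟨n, hn⟩ := g_dense_down (4 * (y - 3/2)) (by linarith)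
  exact ⟨n, by rw [tt]; linarith⟩

/-! ### The set `Sgrid` -/

def chi (v : ℝ) : Prop := (∃ n : ℤ, mid n < v ∧ v < tt (n + 1)) ∨ 15/8 < v

def psi (N : ℕ) (v : ℝ) : Prop :=
  (v < 1 ∧ 1/2 < Int.fract (((N:ℝ) - 1) * v)) ∨
  (1 ≤ v ∧ v < 2 ∧ chi v) ∨
  (2 ≤ v ∧ chi (v - 1))

noncomputable def Sgrid (N : ℕ) : Set ℝ := {u : ℝ | u < 0 ∨ psi N (u - 3 * ⌊u / 3⌋)}

lemma mem_neg (N : ℕ) {u : ℝ} (h : u < 0) : u ∈ Sgrid N := by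
  simp only [Sgrid, Set.mem_setOf_eq]; exact Or.inl h

lemma mem_iff (N : ℕ) {u : ℝ} (h0 : 0 ≤ u) (h3 : u < 3) :
    u ∈ Sgrid N ↔ psi N u := by
  have hf : ⌊u / 3⌋ = 0 := by
    rw [Int.floor_eq_zero_iff]
    constructor
    · positivity
    · rw [div_lt_one (by norm_num : (0:ℝ) < 3)] at *; linarith
  simp only [Sgrid, Set.mem_setOf_eq, hf, Int.cast_zero, mul_zero, sub_zero]
  exact or_iff_right (not_lt.2 h0)

/-! ### `chi` facts -/

lemma chi_on (n : ℤ) {w : ℝ} (h1 : mid n < w) (h2 : w < tt (n + 1)) : chi w :=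
  Or.inl ⟨n, h1, h2⟩

lemma not_chi_low {w : ℝ} (h : w ≤ 5/4) : ¬ chi w := by
  rintro (⟨n, h1, h2⟩ | h')
  · have := tt_lb n; have := tt_lt_mid n; linarith
  · linarith

lemma not_chi_mid {w : ℝ} (h1 : 7/4 ≤ w) (h2 : w ≤ 15/8) : ¬ chi w := by
  rintro (⟨n, ha, hb⟩ | h')
  · have := tt_ub (n + 1); linarith
  · linarith

lemma not_chi_t (n : ℤ) {w : ℝ} (hw1 : tt n < w) (hw2 : w ≤ mid n) : ¬ chi w := by
  rintro (⟨j, h1, h2⟩ | h')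
  · rcases le_or_gt n j with hj | hj
    · have := mid_mono hj; linarith
    · have : tt (j + 1) ≤ tt n := tt_mono_le (by omega)
      linarith
  · have := tt_ub (n + 1); have := mid_lt_tt n; linarith

/-! ### on/off regions of `Sgrid` in `[1, 3)` -/

lemma on_t (N : ℕ) (n : ℤ) {v : ℝ} (h1 : mid n < v) (h2 : v < tt (n + 1)) :
    v ∈ Sgrid N := by
  have hb1 := tt_lb n
  have hb2 := tt_ub (n + 1)
  have hm := tt_lt_mid n
  rw [mem_iff N (by linarith) (by linarith)]
  exact Or.inr (Or.inl ⟨by linarith, by linarith, chi_on n h1 h2⟩)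

lemma off_t (N : ℕ) (n : ℤ) {v : ℝ} (h1 : tt n < v) (h2 : v ≤ mid n) :
    v ∉ Sgrid N := by
  have hb1 := tt_lb n
  have hm := mid_lt_tt n
  have hb2 := tt_ub (n + 1)
  rw [mem_iff N (by linarith) (by linarith)]
  rintro (⟨hlt, -⟩ | ⟨-, -, hchi⟩ | ⟨hge, -⟩)
  · linarith
  · exact not_chi_t n h1 h2 hchi
  · linarith

lemma off_gap1 (N : ℕ) {v : ℝ} (h1 : 1 ≤ v) (h2 : v ≤ 5/4) : v ∉ Sgrid N := by
  rw [mem_iff N (by linarith) (by linarith)]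
  rintro (⟨hlt, -⟩ | ⟨-, -, hchi⟩ | ⟨hge, -⟩)
  · linarith
  · exact not_chi_low h2 hchi
  · linarith

lemma off_gap2 (N : ℕ) {v : ℝ} (h1 : 7/4 ≤ v) (h2 : v ≤ 15/8) : v ∉ Sgrid N := by
  rw [mem_iff N (by linarith) (by linarith)]
  rintro (⟨hlt, -⟩ | ⟨-, -, hchi⟩ | ⟨hge, -⟩)
  · linarith
  · exact not_chi_mid h1 h2 hchi
  · linarith

lemma on_high (N : ℕ) {v : ℝ} (h1 : 15/8 < v) (h2 : v < 2) : v ∈ Sgrid N := by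
  rw [mem_iff N (by linarith) (by linarith)]
  exact Or.inr (Or.inl ⟨by linarith, h2, Or.inr h1⟩)

lemma off_2 (N : ℕ) {v : ℝ} (h1 : 2 ≤ v) (h2 : v ≤ 9/4) : v ∉ Sgrid N := by
  rw [mem_iff N (by linarith) (by linarith)]
  rintro (⟨hlt, -⟩ | ⟨-, hlt, -⟩ | ⟨-, hchi⟩)
  · linarith
  · linarith
  · exact not_chi_low (by linarith) hchi

lemma mem_12 (N : ℕ) {v : ℝ} (h1 : 1 < v) (h2 : v < 2) :
    (v ∈ Sgrid N ↔ chi v) := by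
  rw [mem_iff N (by linarith) (by linarith)]
  constructor
  · rintro (⟨h, -⟩ | ⟨-, -, h⟩ | ⟨h, -⟩)
    · linarith
    · exact h
    · linarith
  · intro h; exact Or.inr (Or.inl ⟨by linarith, h2, h⟩)

lemma mem_23 (N : ℕ) {v : ℝ} (h1 : 2 < v) (h2 : v < 3) :
    (v ∈ Sgrid N ↔ chi (v - 1)) := by
  rw [mem_iff N (by linarith) (by linarith)]
  constructor
  · rintro (⟨h, -⟩ | ⟨-, h, -⟩ | ⟨-, h⟩)
    · linarith
    · linarith
    · exact h
  · intro h; exact Or.inr (Or.inr ⟨by linarith, h⟩)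

/-! ### Supporting points coming from `tt` -/

lemma supp_tt (N : ℕ) (n : ℤ) : Supp (Sgrid N) (tt n) := by
  have h1 : n - 1 + 1 = n := by ring
  apply supp_intro (a := mid (n - 1)) (b := mid n)
  · have := mid_lt_tt (n - 1); rw [h1] at this; exact this
  · exact tt_lt_mid n
  · intro v hv1 hv2
    exact on_t N (n - 1) hv1 (by rw [h1]; exact hv2)
  · intro v hv1 hv2
    exact off_t N n hv1 hv2.le

lemma notSupp_between_t (N : ℕ) (m : ℤ) {z : ℝ} (h1 : tt m < z) (h2 : z < tt (m + 1)) :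
    ¬ Supp (Sgrid N) z := by
  rcases le_or_gt z (mid m) with h | h
  · exact notSupp_left' h1 fun v hv1 hv2 => off_t N m hv1 (by linarith)
  · exact notSupp_right' h2 fun v hv1 hv2 => on_t N m (by linarith) hv2

lemma notSupp_74 (N : ℕ) {z : ℝ} (h1 : 7/4 ≤ z) (h2 : z ≤ 15/8) :
    ¬ Supp (Sgrid N) z := by
  apply notSupp_left
  intro y hy
  rcases lt_or_ge y (7/4) with hy7 | hy7
  · have hm : max y (3/2) < 7/4 := max_lt hy7 (by norm_num)
    obtain ⟨n, hn⟩ := tt_dense (max y (3/2)) hm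
    have hmy := le_max_left y (3/2)
    have htm := tt_lt_mid n
    have hmt := mid_lt_tt n
    have hub := tt_ub (n + 1)
    refine ⟨(tt n + mid n) / 2, by linarith, by linarith,
      off_t N n (by linarith) (by linarith)⟩
  · refine ⟨(y + z) / 2, by linarith, by linarith,
      off_gap2 N (by linarith) (by linarith)⟩

end GridAux

namespace GridAux

/-! ### The chain on `[0,1]` -/

noncomputable def xx (N : ℕ) (i : ℕ) : ℝ := ((i : ℝ) - 1) / ((N : ℝ) - 1)

lemma hcN {N : ℕ} (hN : 2 ≤ N) : (0:ℝ) < (N:ℝ) - 1 := by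
  have : (2:ℝ) ≤ (N:ℝ) := by exact_mod_cast hN
  linarith

lemma off01 {N : ℕ} (hN : 2 ≤ N) (i : ℕ) (h1 : 1 ≤ i) (h2 : i < N) {v : ℝ}
    (hv1 : xx N i < v) (hv2 : v < xx N i + 1 / (2 * ((N:ℝ) - 1))) :
    v ∉ Sgrid N := by
  have hc0 := hcN hN
  have hi1 : (1:ℝ) ≤ (i:ℝ) := by exact_mod_cast h1
  have hiN : (i:ℝ) ≤ (N:ℝ) - 1 := by
    have : (i:ℝ) + 1 ≤ (N:ℝ) := by exact_mod_cast h2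
    linarith
  have hxi : ((N:ℝ) - 1) * xx N i = (i:ℝ) - 1 := by
    rw [xx]; field_simp
  have hcv1 : (i:ℝ) - 1 < ((N:ℝ) - 1) * v := by
    nlinarith [mul_lt_mul_of_pos_left hv1 hc0]
  have hcv2 : ((N:ℝ) - 1) * v < (i:ℝ) - 1/2 := by
    have hmul : ((N:ℝ) - 1) * (xx N i + 1 / (2 * ((N:ℝ) - 1))) = (i:ℝ) - 1 + 1/2 := by
      rw [xx]; field_simp
    nlinarith [mul_lt_mul_of_pos_left hv2 hc0]
  have hv0 : 0 < v := by nlinarith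
  have hvlt1 : v < 1 := by nlinarith
  rw [mem_iff N hv0.le (by linarith)]
  rintro (⟨-, hfr⟩ | ⟨hge, -⟩ | ⟨hge, -⟩)
  · have hfl : ⌊((N:ℝ) - 1) * v⌋ = (i:ℤ) - 1 := by
      rw [Int.floor_eq_iff]
      push_cast
      constructor <;> linarith
    rw [← Int.self_sub_floor, hfl] at hfr
    push_cast at hfr
    linarith
  · linarith
  · linarith

lemma on01 {N : ℕ} (hN : 2 ≤ N) (i : ℕ) (h1 : 1 ≤ i) (h2 : i < N) {v : ℝ}
    (hv1 : xx N (i + 1) - 1 / (2 * ((N:ℝ) - 1)) < v) (hv2 : v < xx N (i + 1)) :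
    v ∈ Sgrid N := by
  have hc0 := hcN hN
  have hi1 : (1:ℝ) ≤ (i:ℝ) := by exact_mod_cast h1
  have hiN : (i:ℝ) ≤ (N:ℝ) - 1 := by
    have : (i:ℝ) + 1 ≤ (N:ℝ) := by exact_mod_cast h2
    linarith
  have hxi : ((N:ℝ) - 1) * xx N (i + 1) = (i:ℝ) := by
    rw [xx]; push_cast; field_simp; ring
  have hcv2 : ((N:ℝ) - 1) * v < (i:ℝ) := by
    nlinarith [mul_lt_mul_of_pos_left hv2 hc0]
  have hcv1 : (i:ℝ) - 1/2 < ((N:ℝ) - 1) * v := by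
    have hmul : ((N:ℝ) - 1) * (xx N (i + 1) - 1 / (2 * ((N:ℝ) - 1))) = (i:ℝ) - 1/2 := by
      rw [xx]; push_cast; field_simp; ring
    nlinarith [mul_lt_mul_of_pos_left hv1 hc0]
  have hv0 : 0 < v := by nlinarith
  have hvlt1 : v < 1 := by nlinarith
  rw [mem_iff N hv0.le (by linarith)]
  refine Or.inl ⟨hvlt1, ?_⟩
  have hfl : ⌊((N:ℝ) - 1) * v⌋ = (i:ℤ) - 1 := by
    rw [Int.floor_eq_iff]
    push_cast
    constructor <;> linarith
  rw [← Int.self_sub_floor, hfl]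
  push_cast
  linarith

lemma xx_one {N : ℕ} : xx N 1 = 0 := by rw [xx]; norm_num

lemma xx_last {N : ℕ} (hN : 2 ≤ N) : xx N N = 1 := by
  rw [xx]; exact div_self (ne_of_gt (hcN hN))

lemma xx_step {N : ℕ} (hN : 2 ≤ N) (i : ℕ) :
    xx N (i + 1) = xx N i + 2 * (1 / (2 * ((N:ℝ) - 1))) := by
  have hc0 := hcN hN
  rw [xx, xx]
  push_cast
  field_simp
  ring

lemma xx_lt {N : ℕ} (hN : 2 ≤ N) {i j : ℕ} (h : i < j) : xx N i < xx N j := by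
  have hc0 := hcN hN
  rw [xx, xx, div_lt_div_iff₀ hc0 hc0]
  have : (i:ℝ) < (j:ℝ) := by exact_mod_cast h
  nlinarith

lemma supp_chain {N : ℕ} (hN : 2 ≤ N) (i : ℕ) (h1 : 1 ≤ i) (h2 : i ≤ N) :
    Supp (Sgrid N) (xx N i) := by
  have hc0 := hcN hN
  have hd0 : 0 < 1 / (2 * ((N:ℝ) - 1)) := by positivity
  -- the left side
  have hleft : ∃ a : ℝ, a < xx N i ∧ ∀ v, a < v → v < xx N i → v ∈ Sgrid N := by
    rcases eq_or_lt_of_le h1 with h | h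
    · refine ⟨-1, ?_, ?_⟩
      · rw [← h, xx_one]; norm_num
      · intro v hv1 hv2
        rw [← h, xx_one] at hv2
        exact mem_neg N hv2
    · have hi' : i - 1 + 1 = i := by omega
      refine ⟨xx N i - 1 / (2 * ((N:ℝ) - 1)), by linarith, ?_⟩
      intro v hv1 hv2
      have := on01 hN (i - 1) (by omega) (by omega)
        (v := v) (by rw [hi']; exact hv1) (by rw [hi']; exact hv2)
      exact this
  -- the right side
  have hright : ∃ b : ℝ, xx N i < b ∧ ∀ v, xx N i < v → v < b → v ∉ Sgrid N := by
    rcases lt_or_eq_of_le h2 with h | h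
    · exact ⟨xx N i + 1 / (2 * ((N:ℝ) - 1)), by linarith,
        fun v hv1 hv2 => off01 hN i h1 h hv1 hv2⟩
    · refine ⟨5/4, ?_, ?_⟩
      · rw [h, xx_last hN]; norm_num
      · intro v hv1 hv2
        rw [h, xx_last hN] at hv1
        exact off_gap1 N hv1.le hv2.le
  obtain ⟨a, ha, hon⟩ := hleft
  obtain ⟨b, hb, hoff⟩ := hright
  exact supp_intro ha hb hon hoff

lemma notSupp_between01 {N : ℕ} (hN : 2 ≤ N) (i : ℕ) (h1 : 1 ≤ i) (h2 : i < N) {z : ℝ}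
    (hz1 : xx N i < z) (hz2 : z < xx N (i + 1)) : ¬ Supp (Sgrid N) z := by
  have hstep := xx_step hN i
  rcases le_or_gt z (xx N i + 1 / (2 * ((N:ℝ) - 1))) with h | h
  · exact notSupp_left' hz1 fun v hv1 hv2 => off01 hN i h1 h2 hv1 (by linarith)
  · exact notSupp_right' hz2 fun v hv1 hv2 => on01 hN i h1 h2 (by linarith) hv2

/-! ### Periodicity -/

lemma periodic_mem (N : ℕ) {v : ℝ} (hv : -(1/8 : ℝ) < v) :
    (v ∈ Sgrid N ↔ v + 3 ∈ Sgrid N) := by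
  rcases lt_or_ge v 0 with h | h
  · constructor
    · intro _
      rw [mem_iff N (by linarith) (by linarith)]
      exact Or.inr (Or.inr ⟨by linarith, Or.inr (by linarith)⟩)
    · intro _
      exact mem_neg N h
  · have key : v + 3 - 3 * ((⌊(v + 3) / 3⌋ : ℤ) : ℝ) = v - 3 * ((⌊v / 3⌋ : ℤ) : ℝ) := by
      rw [show (v + 3) / 3 = v / 3 + 1 by ring, Int.floor_add_one]
      push_cast
      ring
    simp only [Sgrid, Set.mem_setOf_eq, key]
    rw [or_iff_right (not_lt.2 h), or_iff_right (not_lt.2 (by linarith : (0:ℝ) ≤ v + 3))]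

end GridAux

/-- For every `N ≥ 2` there is a set `S ⊆ ℝ` satisfying the grid axioms
A2–A7 (with landmark 0). -/
theorem gridAxioms_consistent : ∀ N : ℕ, 2 ≤ N → ∃ S : Set ℝ, GridAxioms N S := by
  intro N hN
  open GridAux in
  refine ⟨GridAux.Sgrid N, ⟨?_, ?_, ?_⟩, ?_, ?_, ?_, ?_, ?_⟩
  -- A2: Supp 0
  · have := GridAux.supp_chain hN 1 le_rfl (by omega)
    rwa [GridAux.xx_one] at this
  -- A2: Supp 1
  · have := GridAux.supp_chain hN N (by omega) le_rfl
    rwa [GridAux.xx_last hN] at this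
  -- A2: Supp 2
  · exact GridAux.supp_intro (a := 15/8) (b := 9/4) (by norm_num) (by norm_num)
      (fun v h1 h2 => GridAux.on_high N h1 h2)
      (fun v h1 h2 => GridAux.off_2 N h1.le h2.le)
  -- A3
  · intro x hx; exact GridAux.mem_neg N hx
  -- A4
  · refine ⟨fun i => GridAux.xx N i, GridAux.xx_one, GridAux.xx_last hN, ?_, ?_⟩
    · intro i h1 h2
      have hc0 := GridAux.hcN hN
      constructor
      · simp only [GridAux.xx]
        apply div_nonneg _ hc0.le
        have : (1:ℝ) ≤ (i:ℝ) := by exact_mod_cast h1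
        linarith
      · have := GridAux.xx_lt hN h2
        rwa [GridAux.xx_last hN] at this
    · intro i h1 h2
      exact ⟨GridAux.supp_chain hN i h1 h2.le,
        GridAux.supp_chain hN (i + 1) (by omega) (by omega),
        GridAux.xx_lt hN (by omega),
        fun z hz1 hz2 => GridAux.notSupp_between01 hN i h1 h2 hz1 hz2⟩
  -- A5
  · refine ⟨5/4, 7/4, by norm_num, by norm_num, by norm_num, ?_, ?_, ?_⟩
    -- successors
    · intro x hx1 hx2
      obtain ⟨n₁, hn₁⟩ := GridAux.tt_dense x hx2
      obtain ⟨n₀, hn₀⟩ := GridAux.tt_dense_down x hx1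
      obtain ⟨lb, hlbP, hlb⟩ := Int.exists_least_of_bdd (P := fun n : ℤ => x < tt n)
        ⟨n₀, fun z hz => by
          by_contra hzc
          push_neg at hzc
          have := GridAux.tt_mono hzc
          linarith⟩ ⟨n₁, hn₁⟩
      refine ⟨GridAux.tt lb, hlbP, GridAux.tt_ub lb, GridAux.supp_tt N lb, ?_⟩
      intro z hz1 hz2
      have hprev : GridAux.tt (lb - 1) ≤ x := by
        by_contra h
        push_neg at h
        have := hlb _ h
        omega
      have h1 : lb - 1 + 1 = lb := by ring
      exact GridAux.notSupp_between_t N (lb - 1) (by linarith) (by rw [h1]; linarith)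
    -- predecessors
    · intro x hx1 hx2
      obtain ⟨n₁, hn₁⟩ := GridAux.tt_dense x hx2
      obtain ⟨n₀, hn₀⟩ := GridAux.tt_dense_down x hx1
      obtain ⟨ub, hubP, hub⟩ := Int.exists_greatest_of_bdd (P := fun n : ℤ => tt n < x)
        ⟨n₁, fun z hz => by
          by_contra hzc
          push_neg at hzc
          have := GridAux.tt_mono hzc
          linarith⟩ ⟨n₀, hn₀⟩
      refine ⟨GridAux.tt ub, GridAux.tt_lb ub, hubP, GridAux.supp_tt N ub, ?_⟩
      intro z hz1 hz2
      have hnext : x ≤ GridAux.tt (ub + 1) := by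
        by_contra h
        push_neg at h
        have := hub _ h
        omega
      exact GridAux.notSupp_between_t N ub hz1 (by linarith)
    -- all supporting points of (1,2) lie in (5/4, 7/4)
    · intro x hx1 hx2 hs
      constructor
      · by_contra h
        push_neg at h
        exact (GridAux.notSupp_left' hx1 fun v h1 h2 =>
          GridAux.off_gap1 N h1.le (by linarith)) hs
      · by_contra h
        push_neg at h
        rcases le_or_gt x (15/8) with h' | h'
        · exact GridAux.notSupp_74 N h h' hs
        · exact (GridAux.notSupp_right' hx2 fun v h1 h2 =>
            GridAux.on_high N (by linarith) h2) hs
  -- A6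
  · intro x hx1 hx2
    have hδ : 0 < min (x - 1) (2 - x) := lt_min (by linarith) (by linarith)
    apply GridAux.supp_translate_iff hδ
    intro v h1 h2
    have hm1 := min_le_left (x - 1) (2 - x)
    have hm2 := min_le_right (x - 1) (2 - x)
    have hv1 : 1 < v := by linarith
    have hv2 : v < 2 := by linarith
    rw [GridAux.mem_12 N hv1 hv2, GridAux.mem_23 N (by linarith) (by linarith),
      show v + 1 - 1 = v by ring]
  -- A7
  · intro x hx
    apply GridAux.supp_translate_iff (δ := 1/8) (by norm_num)
    intro v h1 h2
    exact GridAux.periodic_mem N (by linarith)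
end

section
/- Let N ≥ 2 and let S ⊆ ℝ satisfy the grid axioms A2–A7 (with landmark 0). Then the set of supporting points of S lying in the open interval (1, 2), with the order induced from ℝ, is order-isomorphic to ℤ. -/
/-- If `S ⊆ ℝ` satisfies the grid axioms A2–A7 (with landmark 0, `N ≥ 2`),
then the set of supporting points of `S` in the open interval `(1, 2)`,
ordered by the order induced from `ℝ`, is order-isomorphic to `ℤ`. -/
theorem grid_supp_Ioo_orderIso_int (N : ℕ) (hN : 2 ≤ N) (S : Set ℝ)
    (h : GridAxioms N S) :
    Nonempty ({x : ℝ | Supp S x ∧ x ∈ Set.Ioo (1 : ℝ) 2} ≃o ℤ) := by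
  obtain ⟨-, -, -, ⟨b₁, b₂, hb1, hb12, hb2, hsucc, hpred, hin⟩, -, -⟩ := h
  set T : Set ℝ := {x : ℝ | Supp S x ∧ x ∈ Set.Ioo (1 : ℝ) 2} with hT
  have fin : ∀ a b : ℝ, b₁ < a → b < b₂ → (T ∩ Set.Icc a b).Finite := by
    intro a b ha hb
    have key : ∀ c : ℝ, ∃ u v : ℝ, u < c ∧ c < v ∧
        (c ∈ Set.Icc a b → ∀ x ∈ T, u < x → x < v → x = c) := by
      intro c
      by_cases hc : c ∈ Set.Icc a b
      · obtain ⟨y, hcy, hyb2, hySupp, hyno⟩ :=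
          hsucc c (by linarith [hc.1]) (by linarith [hc.2])
        obtain ⟨y', hb1y', hy'c, hy'Supp, hy'no⟩ :=
          hpred c (by linarith [hc.1]) (by linarith [hc.2])
        refine ⟨y', y, hy'c, hcy, fun _ x hx hux hxv => ?_⟩
        by_contra hne
        rcases lt_or_gt_of_ne hne with hlt | hgt
        · exact hy'no x hux hlt hx.1
        · exact hyno x hgt hxv hx.1
      · exact ⟨c - 1, c + 1, by linarith, by linarith, fun h => absurd h hc⟩
    choose u v hu hv hkey using key
    obtain ⟨t, htmem, htcov⟩ := isCompact_Icc.elim_nhds_subcover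
      (fun c => Set.Ioo (u c) (v c)) (fun c _ => Ioo_mem_nhds (hu c) (hv c))
    refine t.finite_toSet.subset ?_
    rintro x ⟨hxT, hxab⟩
    have hx := htcov hxab
    simp only [Set.mem_iUnion, Set.mem_Ioo] at hx
    obtain ⟨c, hct, h1, h2⟩ := hx
    have hx' : x = c := hkey c (htmem c hct) x hxT h1 h2
    simpa [hx'] using hct
  letI : LocallyFiniteOrder ↥T := LocallyFiniteOrder.ofFiniteIcc (by
    intro p q
    have h1 : b₁ < (p : ℝ) := (hin p.1 p.2.2.1 p.2.2.2 p.2.1).1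
    have h2 : (q : ℝ) < b₂ := (hin q.1 q.2.2.1 q.2.2.2 q.2.1).2
    have heq : Set.Icc p q = Subtype.val ⁻¹' (T ∩ Set.Icc (p : ℝ) (q : ℝ)) := by
      ext x
      simp only [Set.mem_Icc, Set.mem_preimage, Set.mem_inter_iff, ← Subtype.coe_le_coe]
      exact ⟨fun hx => ⟨x.2, hx⟩, fun hx => hx.2⟩
    rw [heq]
    exact (fin _ _ h1 h2).preimage Subtype.val_injective.injOn)
  haveI : Nonempty ↥T := by
    obtain ⟨y, h1, h2, h3, -⟩ := hsucc ((b₁ + b₂) / 2) (by linarith) (by linarith)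
    exact ⟨⟨y, h3, by constructor <;> linarith⟩⟩
  haveI : NoMinOrder ↥T := ⟨fun a => by
    obtain ⟨hin1, hin2⟩ := hin a.1 a.2.2.1 a.2.2.2 a.2.1
    obtain ⟨y, hy1, hy2, hy3, -⟩ := hpred a.1 hin1 hin2
    have ha2 : (a : ℝ) < 2 := a.2.2.2
    exact ⟨⟨y, hy3, by constructor <;> linarith⟩, Subtype.coe_lt_coe.mp hy2⟩⟩
  haveI : NoMaxOrder ↥T := ⟨fun a => by
    obtain ⟨hin1, hin2⟩ := hin a.1 a.2.2.1 a.2.2.2 a.2.1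
    obtain ⟨y, hy1, hy2, hy3, -⟩ := hsucc a.1 hin1 hin2
    have ha1 : (1 : ℝ) < (a : ℝ) := a.2.2.1
    exact ⟨⟨y, hy3, by constructor <;> linarith⟩, Subtype.coe_lt_coe.mp hy1⟩⟩
  letI : SuccOrder ↥T := LinearLocallyFiniteOrder.succOrder ↥T
  letI : PredOrder ↥T := LinearLocallyFiniteOrder.predOrder ↥T
  haveI : IsSuccArchimedean ↥T := inferInstance
  exact ⟨orderIsoIntOfLinearSuccPredArch⟩
end

section
/- Let N ≥ 2 and let S ⊆ ℝ satisfy the grid axioms A2–A7 (with landmark 0). Then the set of reals x such that x is a supporting point of S, x has no supporting predecessor (i.e., for every supporting point z < x there is a supporting point strictly between z and x), and x has a supporting successor (i.e., there is a supporting point z > x with no supporting point strictly between x and z), is exactly the set {3k : k ∈ ℕ} of nonnegative multiples of 3. -/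
/-- `EncodBeg S x`: `x` is a supporting point of `S` which has no supporting
predecessor (every supporting point strictly below `x` has another supporting
point strictly between it and `x`) but has a supporting successor. -/
def EncodBeg (S : Set ℝ) (x : ℝ) : Prop :=
  Supp S x ∧
  (∀ z : ℝ, z < x → Supp S z → ∃ w : ℝ, z < w ∧ w < x ∧ Supp S w) ∧
  (∃ z : ℝ, x < z ∧ Supp S z ∧ ∀ w : ℝ, x < w → w < z → ¬ Supp S w)

theorem exists_lt_le_succ_of_lt_of_le {α : Type*} [LinearOrder α] (c : ℕ → α) {a b : ℕ}
    (hab : a ≤ b) {r : α} (ha : c a < r) (hb : r ≤ c b) :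
    ∃ i, a ≤ i ∧ i < b ∧ c i < r ∧ r ≤ c (i + 1) := by
  induction b, hab using Nat.le_induction with
  | base => exact absurd hb ha.not_ge
  | succ b hab ih =>
    rcases le_or_gt r (c b) with hrb | hbr
    · obtain ⟨i, hai, hib, hir, hri⟩ := ih hrb
      exact ⟨i, hai, by omega, hir, hri⟩
    · exact ⟨b, hab, by omega, hbr, hb⟩

theorem exists_eq_add_mul_nat {p x : ℝ} (hp : 0 < p) (hx : 0 ≤ x) :
    ∃ (m : ℕ) (r : ℝ), 0 ≤ r ∧ r < p ∧ x = r + p * m := by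
  refine ⟨⌊x / p⌋₊, x - p * ⌊x / p⌋₊, ?_, ?_, by ring⟩
  · have := Nat.floor_le (div_nonneg hx hp.le)
    rw [le_div_iff₀ hp] at this
    linarith
  · have := Nat.lt_floor_add_one (x / p)
    rw [div_lt_iff₀ hp] at this
    linarith

theorem encodBeg_iff {S : Set ℝ} {x : ℝ} :
    EncodBeg S x ↔ Supp S x ∧ (∀ u, ¬ SuppSucc S u x) ∧ ∃ z, SuppSucc S x z := by
  constructor
  · rintro ⟨hx, hpred, z, hxz, hz, hbetween⟩
    refine ⟨hx, fun u ⟨hu, _, hux, hno⟩ => ?_, z, hx, hz, hxz, hbetween⟩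
    obtain ⟨w, huw, hwx, hw⟩ := hpred u hux hu
    exact hno w huw hwx hw
  · rintro ⟨hx, hnoPred, z, -, hz, hxz, hbetween⟩
    refine ⟨hx, fun u hux hu => ?_, z, hxz, hz, hbetween⟩
    by_contra! hno
    exact hnoPred u ⟨hu, hx, hux, hno⟩

theorem Supp.nonneg {S : Set ℝ} (hneg : ∀ x : ℝ, x < 0 → x ∈ S) {t : ℝ} (ht : Supp S t) :
    0 ≤ t := by
  by_contra! ht0
  obtain ⟨-, z, htz, hgap⟩ := ht
  obtain ⟨s, hts, hs⟩ := exists_between (lt_min htz ht0)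
  exact hgap s ⟨hts, hs.trans_le (min_le_left _ _)⟩ (hneg s (hs.trans_le (min_le_right _ _)))

section Periodic

variable {S : Set ℝ} {p : ℝ}

theorem supp_add_mul_nat_iff (hp : 0 ≤ p) (hper : ∀ x, 0 ≤ x → (Supp S x ↔ Supp S (x + p)))
    {t : ℝ} (ht : 0 ≤ t) (m : ℕ) : Supp S (t + p * m) ↔ Supp S t := by
  induction m with
  | zero => simp
  | succ m ih =>
    rw [Nat.cast_succ, mul_add_one, ← add_assoc, ← hper _ (by positivity)]
    exact ih

theorem suppSucc_add_mul_nat_iff (hp : 0 ≤ p)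
    (hper : ∀ x, 0 ≤ x → (Supp S x ↔ Supp S (x + p))) {u x : ℝ} (hu : 0 ≤ u) (m : ℕ) :
    SuppSucc S (u + p * m) (x + p * m) ↔ SuppSucc S u x := by
  have hpm : 0 ≤ p * m := by positivity
  have shift {t : ℝ} (ht : 0 ≤ t) := supp_add_mul_nat_iff hp hper ht m
  constructor
  · rintro ⟨hu', hx', hux, hbetween⟩
    refine ⟨(shift hu).1 hu', (shift (by linarith)).1 hx', by linarith, fun z huz hzx hz => ?_⟩
    exact hbetween (z + p * m) (by linarith) (by linarith) ((shift (by linarith)).2 hz)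
  · rintro ⟨hu', hx', hux, hbetween⟩
    refine ⟨(shift hu).2 hu', (shift (by linarith)).2 hx', by linarith, fun z huz hzx hz => ?_⟩
    refine hbetween (z - p * m) (by linarith) (by linarith) ((shift (by linarith)).1 ?_)
    rwa [sub_add_cancel]

theorem not_suppSucc_mul_nat (hp : 0 < p) (hper : ∀ x, 0 ≤ x → (Supp S x ↔ Supp S (x + p)))
    (hneg : ∀ x : ℝ, x < 0 → x ∈ S)
    (hgap : ∀ r, 0 ≤ r → r < p → Supp S r → ∃ w, r < w ∧ w < p ∧ Supp S w) (k : ℕ) (u : ℝ) :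
    ¬ SuppSucc S u (p * k) := by
  rintro ⟨hu, -, huk, hbetween⟩
  obtain ⟨m, r, hr0, hrp, rfl⟩ := exists_eq_add_mul_nat hp (Supp.nonneg hneg hu)
  obtain ⟨w, hrw, hwp, hw⟩ :=
    hgap r hr0 hrp ((supp_add_mul_nat_iff hp.le hper hr0 m).1 hu)
  have hmk : (m : ℝ) + 1 ≤ k := by
    have : (m : ℝ) < k := lt_of_mul_lt_mul_left (by linarith) hp.le
    exact_mod_cast (show m < k by exact_mod_cast this)
  refine hbetween (w + p * m) (by linarith) ?_
    ((supp_add_mul_nat_iff hp.le hper (by linarith) m).2 hw)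
  nlinarith

end Periodic
namespace GridAxioms

variable {N : ℕ} {S : Set ℝ}

theorem supp_sub_one_iff (h : GridAxioms N S) {t : ℝ} (h2 : 2 < t) (h3 : t < 3) :
    Supp S (t - 1) ↔ Supp S t := by
  simpa using h.2.2.2.2.1 (t - 1) (by linarith) (by linarith)

theorem suppSucc_add_one (h : GridAxioms N S) {u x : ℝ} (hu : 1 < u) (hx : x < 2)
    (hux : SuppSucc S u x) : SuppSucc S (u + 1) (x + 1) := by
  obtain ⟨hu', hx', hlt, hbetween⟩ := hux
  refine ⟨(h.2.2.2.2.1 u hu (by linarith)).1 hu', (h.2.2.2.2.1 x (by linarith) hx).1 hx',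
    by linarith, fun z huz hzx hz => hbetween (z - 1) (by linarith) (by linarith) ?_⟩
  exact (h.supp_sub_one_iff (by linarith) (by linarith)).2 hz

theorem exists_supp_mem_Ioo_two_three (h : GridAxioms N S) : ∃ y, 2 < y ∧ y < 3 ∧ Supp S y := by
  obtain ⟨-, -, -, ⟨b₁, b₂, hb₁, hb₁₂, hb₂, hsucc, -⟩, hA6, -⟩ := h
  obtain ⟨y, hy, hyb₂, hys, -⟩ := hsucc ((b₁ + b₂) / 2) (by linarith) (by linarith)
  exact ⟨y + 1, by linarith, by linarith, (hA6 y (by linarith) (by linarith)).1 hys⟩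

theorem exists_suppSucc_of_mem_Ioo_one_two (h : GridAxioms N S) {t : ℝ} (h1 : 1 < t)
    (h2 : t < 2) (ht : Supp S t) : ∃ z, z < 2 ∧ SuppSucc S t z := by
  obtain ⟨-, -, -, ⟨b₁, b₂, -, -, hb₂, hsucc, -, hin⟩, -⟩ := h
  obtain ⟨hb₁t, htb₂⟩ := hin t h1 h2 ht
  obtain ⟨z, htz, hzb₂, hz, hbetween⟩ := hsucc t hb₁t htb₂
  exact ⟨z, by linarith, ht, hz, htz, hbetween⟩

theorem exists_suppPred_of_mem_Ioo_one_two (h : GridAxioms N S) {t : ℝ} (h1 : 1 < t)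
    (h2 : t < 2) (ht : Supp S t) : ∃ u, 1 < u ∧ SuppSucc S u t := by
  obtain ⟨-, -, -, ⟨b₁, b₂, hb₁, -, -, -, hpred, hin⟩, -⟩ := h
  obtain ⟨hb₁t, htb₂⟩ := hin t h1 h2 ht
  obtain ⟨u, hb₁u, hut, hu, hbetween⟩ := hpred t hb₁t htb₂
  exact ⟨u, by linarith, hu, ht, hut, hbetween⟩

theorem exists_suppPred_of_mem_Ioo_two_three (h : GridAxioms N S) {t : ℝ} (h2 : 2 < t)
    (h3 : t < 3) (ht : Supp S t) : ∃ u, 2 < u ∧ SuppSucc S u t := by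
  obtain ⟨u, hu, hut⟩ := h.exists_suppPred_of_mem_Ioo_one_two (t := t - 1) (by linarith)
    (by linarith) ((h.supp_sub_one_iff h2 h3).2 ht)
  refine ⟨u + 1, by linarith, ?_⟩
  simpa using h.suppSucc_add_one hu (by linarith) hut

theorem exists_suppPred_of_mem_Ioc_zero_one (h : GridAxioms N S) (hN : 2 ≤ N) {r : ℝ}
    (h0 : 0 < r) (h1 : r ≤ 1) (hr : Supp S r) : ∃ u, SuppSucc S u r := by
  obtain ⟨-, -, ⟨c, hc1, hcN, -, hchain⟩, -⟩ := h
  obtain ⟨i, hi1, hiN, hcir, hrci⟩ :=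
    exists_lt_le_succ_of_lt_of_le c (by omega : 1 ≤ N) (hc1 ▸ h0) (hcN ▸ h1)
  have hr_eq : r = c (i + 1) := by
    by_contra hne
    exact (hchain i hi1 hiN).2.2.2 r hcir (lt_of_le_of_ne hrci hne) hr
  exact ⟨c i, hr_eq ▸ hchain i hi1 hiN⟩

theorem exists_suppPred (h : GridAxioms N S) (hN : 2 ≤ N) {r : ℝ} (h0 : 0 < r) (h3 : r < 3)
    (h2 : r ≠ 2) (hr : Supp S r) : ∃ u, SuppSucc S u r := by
  rcases le_or_gt r 1 with h1 | h1
  · exact h.exists_suppPred_of_mem_Ioc_zero_one hN h0 h1 hr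
  rcases h2.lt_or_gt with h2 | h2
  · obtain ⟨u, -, hu⟩ := h.exists_suppPred_of_mem_Ioo_one_two h1 h2 hr
    exact ⟨u, hu⟩
  · obtain ⟨u, -, hu⟩ := h.exists_suppPred_of_mem_Ioo_two_three h2 h3 hr
    exact ⟨u, hu⟩

theorem not_suppSucc_two (h : GridAxioms N S) (z : ℝ) : ¬ SuppSucc S 2 z := by
  rintro ⟨-, hz, h2z, hbetween⟩
  rcases lt_or_ge z 3 with hz3 | hz3
  · obtain ⟨u, hu, hu', -, huz, -⟩ := h.exists_suppPred_of_mem_Ioo_two_three h2z hz3 hz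
    exact hbetween u hu huz hu'
  · obtain ⟨y, hy2, hy3, hy⟩ := h.exists_supp_mem_Ioo_two_three
    exact hbetween y hy2 (by linarith) hy

theorem exists_supp_between_of_lt_three (h : GridAxioms N S) {r : ℝ} (h3 : r < 3)
    (hr : Supp S r) : ∃ w, r < w ∧ w < 3 ∧ Supp S w := by
  rcases lt_trichotomy r 2 with h2 | rfl | h2
  · exact ⟨2, h2, by norm_num, h.1.2.2⟩
  · exact h.exists_supp_mem_Ioo_two_three
  · obtain ⟨z, hz2, hz⟩ := h.exists_suppSucc_of_mem_Ioo_one_two (t := r - 1) (by linarith)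
      (by linarith) ((h.supp_sub_one_iff h2 h3).2 hr)
    obtain ⟨-, hz', hrz, -⟩ := h.suppSucc_add_one (by linarith) hz2 hz
    exact ⟨z + 1, by linarith, by linarith, hz'⟩

theorem exists_suppSucc_zero (h : GridAxioms N S) (hN : 2 ≤ N) : ∃ z, SuppSucc S 0 z := by
  obtain ⟨-, -, ⟨c, hc1, -, -, hchain⟩, -⟩ := h
  exact ⟨c 2, hc1 ▸ hchain 1 le_rfl hN⟩

end GridAxioms

/-- If `S ⊆ ℝ` satisfies the grid axioms A2–A7 (with landmark 0, `N ≥ 2`),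
then the reals satisfying `EncodBeg` are exactly the nonnegative
multiples of 3. -/
theorem grid_encodBeg_eq_multiples_of_three (N : ℕ) (hN : 2 ≤ N) (S : Set ℝ)
    (h : GridAxioms N S) :
    {x : ℝ | EncodBeg S x} = {x : ℝ | ∃ k : ℕ, x = 3 * (k : ℝ)} := by
  have ⟨_, hneg, _, _, _, hper⟩ := h
  ext x
  simp only [Set.mem_ofPred_eq, encodBeg_iff]
  constructor
  · rintro ⟨hx, hnoPred, z, hz⟩
    obtain ⟨m, r, hr0, hr3, rfl⟩ := exists_eq_add_mul_nat three_pos (Supp.nonneg hneg hx)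
    rcases hr0.eq_or_lt with rfl | hr0
    · exact ⟨m, zero_add _⟩
    exfalso
    by_cases hr2 : r = 2
    · subst hr2
      refine h.not_suppSucc_two (z - 3 * m) ((suppSucc_add_mul_nat_iff zero_le_three hper
        zero_le_two m).1 ?_)
      rwa [sub_add_cancel]
    · obtain ⟨u, hu⟩ := h.exists_suppPred hN hr0 hr3 hr2
        ((supp_add_mul_nat_iff zero_le_three hper hr0.le m).1 hx)
      exact hnoPred _
        ((suppSucc_add_mul_nat_iff zero_le_three hper (Supp.nonneg hneg hu.1) m).2 hu)
  · rintro ⟨k, rfl⟩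
    obtain ⟨z, hz⟩ := h.exists_suppSucc_zero hN
    have hz' := (suppSucc_add_mul_nat_iff zero_le_three hper le_rfl k).2 hz
    rw [zero_add] at hz'
    exact ⟨hz'.1, not_suppSucc_mul_nat three_pos hper hneg
      (fun _ _ h3 hr => h.exists_supp_between_of_lt_three h3 hr) k, _, hz'⟩
end

section
/- Let N ≥ 2 and let S ⊆ ℝ satisfy the grid axioms A2–A7 (with landmark 0). Then every supporting point of S is nonnegative, and the set of all supporting points of S, with the order induced from ℝ, is order-isomorphic to the lexicographic product ℕ ×ₗ (Fin N ⊕ₗ ℤ ⊕ₗ PUnit ⊕ₗ ℤ), where pairs are compared on the ℕ-component first, and ⊕ₗ denotes the lexicographic (ordinal) sum of linear orders; i.e., the supporting points form a linear ordering of order type (N + ζ + 1 + ζ)^ω. -/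

lemma zchain_exists (S : Set ℝ) (b₁ b₂ : ℝ) (hb : b₁ < b₂)
    (hsucc : ∀ x : ℝ, b₁ < x → x < b₂ →
      ∃ y : ℝ, x < y ∧ y < b₂ ∧ Supp S y ∧ ∀ z : ℝ, x < z → z < y → ¬ Supp S z)
    (hpred : ∀ x : ℝ, b₁ < x → x < b₂ →
      ∃ y : ℝ, b₁ < y ∧ y < x ∧ Supp S y ∧ ∀ z : ℝ, y < z → z < x → ¬ Supp S z) :
    ∃ u : ℤ → ℝ, StrictMono u ∧ (∀ k, b₁ < u k ∧ u k < b₂ ∧ Supp S (u k)) ∧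
      (∀ t, b₁ < t → t < b₂ → Supp S t → ∃ k, u k = t) := by
  have hsucc' : ∀ x : ℝ, ∃ y : ℝ, b₁ < x → x < b₂ →
      x < y ∧ y < b₂ ∧ Supp S y ∧ ∀ z : ℝ, x < z → z < y → ¬ Supp S z := by
    intro x
    by_cases hx : b₁ < x ∧ x < b₂
    · obtain ⟨y, hy⟩ := hsucc x hx.1 hx.2
      exact ⟨y, fun _ _ => hy⟩
    · exact ⟨x, fun h1 h2 => absurd ⟨h1, h2⟩ hx⟩
  choose nxt hnxt using hsucc'
  have hpred' : ∀ x : ℝ, ∃ y : ℝ, b₁ < x → x < b₂ →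
      b₁ < y ∧ y < x ∧ Supp S y ∧ ∀ z : ℝ, y < z → z < x → ¬ Supp S z := by
    intro x
    by_cases hx : b₁ < x ∧ x < b₂
    · obtain ⟨y, hy⟩ := hpred x hx.1 hx.2
      exact ⟨y, fun _ _ => hy⟩
    · exact ⟨x, fun h1 h2 => absurd ⟨h1, h2⟩ hx⟩
  choose prv hprv using hpred'
  set m : ℝ := (b₁ + b₂)/2 with hm
  have hm1 : b₁ < m := by rw [hm]; linarith
  have hm2 : m < b₂ := by rw [hm]; linarith
  set a : ℝ := nxt m with ha
  have haP : b₁ < a ∧ a < b₂ ∧ Supp S a := by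
    obtain ⟨h1, h2, h3, _⟩ := hnxt m hm1 hm2
    exact ⟨lt_trans hm1 h1, h2, h3⟩
  set f : ℕ → ℝ := fun n => nxt^[n] a with hfdef
  have hf0 : f 0 = a := rfl
  have hfs : ∀ n, f (n+1) = nxt (f n) := fun n => Function.iterate_succ_apply' nxt n a
  have hfP : ∀ n, b₁ < f n ∧ f n < b₂ ∧ Supp S (f n) := by
    intro n; induction n with
    | zero => exact haP
    | succ n ih =>
      rw [hfs]
      obtain ⟨h1, h2, h3, _⟩ := hnxt (f n) ih.1 ih.2.1
      exact ⟨lt_trans ih.1 h1, h2, h3⟩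
  have hflt : ∀ n, f n < f (n+1) := by
    intro n; rw [hfs]; exact (hnxt (f n) (hfP n).1 (hfP n).2.1).1
  have hfmin : ∀ n, ∀ z, f n < z → z < f (n+1) → ¬ Supp S z := by
    intro n z h1 h2
    rw [hfs] at h2
    exact (hnxt (f n) (hfP n).1 (hfP n).2.1).2.2.2 z h1 h2
  set g : ℕ → ℝ := fun n => prv^[n] a with hgdef
  have hg0 : g 0 = a := rfl
  have hgs : ∀ n, g (n+1) = prv (g n) := fun n => Function.iterate_succ_apply' prv n a
  have hgP : ∀ n, b₁ < g n ∧ g n < b₂ ∧ Supp S (g n) := by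
    intro n; induction n with
    | zero => exact haP
    | succ n ih =>
      rw [hgs]
      obtain ⟨h1, h2, h3, _⟩ := hprv (g n) ih.1 ih.2.1
      exact ⟨h1, lt_trans h2 ih.2.1, h3⟩
  have hglt : ∀ n, g (n+1) < g n := by
    intro n; rw [hgs]; exact (hprv (g n) (hgP n).1 (hgP n).2.1).2.1
  have hgmax : ∀ n, ∀ z, g (n+1) < z → z < g n → ¬ Supp S z := by
    intro n z h1 h2
    rw [hgs] at h1
    exact (hprv (g n) (hgP n).1 (hgP n).2.1).2.2.2 z h1 h2
  set u : ℤ → ℝ := fun k => if 0 ≤ k then f k.toNat else g (-k).toNat with hu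
  have huf : ∀ n : ℕ, u (n : ℤ) = f n := by intro n; simp [hu]
  have hug : ∀ n : ℕ, u (-(n : ℤ)) = g n := by
    intro n
    rcases Nat.eq_zero_or_pos n with h | h
    · subst h; simp [hu, hf0, hg0]
    · have h1 : ¬ ((0:ℤ) ≤ -(n:ℤ)) := by omega
      have h2 : (-(-(n:ℤ))).toNat = n := by omega
      simp [hu, h1, h2, h.ne']
  have humono : StrictMono u := by
    apply strictMono_int_of_lt_succ
    intro k
    rcases le_or_gt 0 k with hk | hk
    · have h1 : u k = f k.toNat := by simp [hu, hk]
      have h2 : u (k+1) = f (k.toNat + 1) := by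
        have h3 : (k+1).toNat = k.toNat + 1 := by omega
        simp [hu, show (0:ℤ) ≤ k+1 by omega, h3]
      rw [h1, h2]; exact hflt _
    · rcases eq_or_lt_of_le (show k + 1 ≤ 0 by omega) with he | hlt
      · have h1 : u k = g 1 := by
          have h3 : (-k).toNat = 1 := by omega
          simp [hu, show ¬ ((0:ℤ) ≤ k) by omega, h3]
        have h2 : u (k+1) = a := by rw [he]; simp [hu, hf0]
        rw [h1, h2]
        have := hglt 0; rwa [hg0] at this
      · have h1 : u k = g ((-(k+1)).toNat + 1) := by
          have h3 : (-k).toNat = (-(k+1)).toNat + 1 := by omega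
          simp [hu, show ¬ ((0:ℤ) ≤ k) by omega, h3]
        have h2 : u (k+1) = g ((-(k+1)).toNat) := by
          simp [hu, show ¬ ((0:ℤ) ≤ k+1) by omega]
        rw [h1, h2]; exact hglt _
  have huP : ∀ k, b₁ < u k ∧ u k < b₂ ∧ Supp S (u k) := by
    intro k
    rcases le_or_gt 0 k with hk | hk
    · rw [show u k = f k.toNat by simp [hu, hk]]; exact hfP _
    · rw [show u k = g (-k).toNat by simp [hu, show ¬ ((0:ℤ) ≤ k) by omega]]; exact hgP _
  refine ⟨u, humono, huP, ?_⟩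
  intro t ht1 ht2 htS
  rcases lt_trichotomy t a with hta | hta | hta
  · -- t < a : find n with g n = t
    have key : ∃ n, g n = t := by
      by_contra hne
      push_neg at hne
      have hgt : ∀ n, t < g n := by
        intro n; induction n with
        | zero => rwa [hg0]
        | succ n ih =>
          by_contra hcon
          push_neg at hcon
          have hlt2 : g (n+1) < t := lt_of_le_of_ne hcon (hne (n+1))
          exact hgmax n t hlt2 ih htS
      set c := sInf (Set.range g) with hc
      have hbdd : BddBelow (Set.range g) := ⟨t, by rintro x ⟨n, rfl⟩; exact (hgt n).le⟩
      have hne' : (Set.range g).Nonempty := ⟨a, 0, hg0⟩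
      have htc : t ≤ c := le_csInf hne' (by rintro x ⟨n, rfl⟩; exact (hgt n).le)
      have hca : c ≤ a := csInf_le hbdd ⟨0, hg0⟩
      have hc1 : b₁ < c := lt_of_lt_of_le ht1 htc
      have hc2 : c < b₂ := lt_of_le_of_lt hca haP.2.1
      obtain ⟨s, hs1, hs2, hs3, hs4⟩ := hsucc c hc1 hc2
      obtain ⟨x, ⟨n, rfl⟩, hxs⟩ := exists_lt_of_csInf_lt hne' hs1
      have hcg : c ≤ g n := csInf_le hbdd ⟨n, rfl⟩
      rcases eq_or_lt_of_le hcg with he | hl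
      · have h5 : c ≤ g (n+1) := csInf_le hbdd ⟨n+1, rfl⟩
        linarith [hglt n]
      · exact hs4 (g n) hl hxs (hgP n).2.2
    obtain ⟨n, hn⟩ := key
    exact ⟨-(n:ℤ), by rw [hug n]; exact hn⟩
  · exact ⟨0, by rw [show (0:ℤ) = ((0:ℕ):ℤ) by rfl, huf 0, hf0]; exact hta.symm⟩
  · -- a < t : find n with f n = t
    have key : ∃ n, f n = t := by
      by_contra hne
      push_neg at hne
      have hft : ∀ n, f n < t := by
        intro n; induction n with
        | zero => rwa [hf0]
        | succ n ih =>
          by_contra hcon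
          push_neg at hcon
          have hlt2 : t < f (n+1) := lt_of_le_of_ne hcon (Ne.symm (hne (n+1)))
          exact hfmin n t ih hlt2 htS
      set c := sSup (Set.range f) with hc
      have hbdd : BddAbove (Set.range f) := ⟨t, by rintro x ⟨n, rfl⟩; exact (hft n).le⟩
      have hne' : (Set.range f).Nonempty := ⟨a, 0, hf0⟩
      have htc : c ≤ t := csSup_le hne' (by rintro x ⟨n, rfl⟩; exact (hft n).le)
      have hca : a ≤ c := le_csSup hbdd ⟨0, hf0⟩
      have hc1 : b₁ < c := lt_of_lt_of_le haP.1 hca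
      have hc2 : c < b₂ := lt_of_le_of_lt htc ht2
      obtain ⟨p, hp1, hp2, hp3, hp4⟩ := hpred c hc1 hc2
      obtain ⟨x, ⟨n, rfl⟩, hxs⟩ := exists_lt_of_lt_csSup hne' hp2
      have hcg : f n ≤ c := le_csSup hbdd ⟨n, rfl⟩
      rcases eq_or_lt_of_le hcg with he | hl
      · have h5 : f (n+1) ≤ c := le_csSup hbdd ⟨n+1, rfl⟩
        linarith [hflt n]
      · exact hp4 (f n) hxs hl (hfP n).2.2
    obtain ⟨n, hn⟩ := key
    exact ⟨(n:ℤ), by rw [huf n]; exact hn⟩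

lemma chain_facts (S : Set ℝ) (N : ℕ) (hN : 2 ≤ N) (xs : ℕ → ℝ)
    (hx1 : xs 1 = 0) (hxN : xs N = 1)
    (hxsucc : ∀ i : ℕ, 1 ≤ i → i < N → SuppSucc S (xs i) (xs (i + 1))) :
    (∀ i, 1 ≤ i → i ≤ N → Supp S (xs i)) ∧
    (∀ i j, 1 ≤ i → i < j → j ≤ N → xs i < xs j) ∧
    (∀ t : ℝ, 0 ≤ t → t ≤ 1 → Supp S t → ∃ i, 1 ≤ i ∧ i ≤ N ∧ xs i = t) := by
  have hsupp : ∀ i, 1 ≤ i → i ≤ N → Supp S (xs i) := by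
    intro i h1 h2
    rcases lt_or_eq_of_le h2 with h | h
    · exact (hxsucc i h1 h).1
    · subst h
      have h3 : i - 1 + 1 = i := by omega
      have := (hxsucc (i-1) (by omega) (by omega)).2.1
      rwa [h3] at this
  have hmono : ∀ i, 1 ≤ i → ∀ j, i + 1 ≤ j → j ≤ N → xs i < xs j := by
    intro i hi j hij
    induction j, hij using Nat.le_induction with
    | base => intro hN'; exact (hxsucc i hi (by omega)).2.2.1
    | succ j hj ih =>
      intro hjN
      exact lt_trans (ih (by omega)) (hxsucc j (by omega) (by omega)).2.2.1
  refine ⟨hsupp, fun i j h1 h2 h3 => hmono i h1 j h2 h3, ?_⟩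
  intro t ht0 ht1 htS
  rcases eq_or_lt_of_le ht1 with he | hlt
  · exact ⟨N, by omega, le_refl N, by rw [hxN, he]⟩
  · classical
    have hex : ∃ i, 1 ≤ i ∧ t < xs i := ⟨N, by omega, by rw [hxN]; exact hlt⟩
    set i₀ := Nat.find hex with hi₀
    obtain ⟨hi1, hi2⟩ := Nat.find_spec hex
    rw [← hi₀] at hi1 hi2
    have hi₀N : i₀ ≤ N := Nat.find_min' hex ⟨by omega, by rw [hxN]; exact hlt⟩
    have hi₀2 : 2 ≤ i₀ := by
      by_contra hcon
      have : i₀ = 1 := by omega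
      rw [this, hx1] at hi2
      linarith
    have hnot := Nat.find_min hex (show i₀ - 1 < i₀ by omega)
    push_neg at hnot
    have hle : xs (i₀ - 1) ≤ t := by
      by_contra hcon
      push_neg at hcon
      exact absurd hcon (by simpa using hnot (by omega))
    rcases eq_or_lt_of_le hle with he | hl
    · exact ⟨i₀ - 1, by omega, by omega, he⟩
    · exfalso
      have h4 := (hxsucc (i₀ - 1) (by omega) (by omega)).2.2.2
      rw [show i₀ - 1 + 1 = i₀ by omega] at h4
      exact h4 t hl hi2 htS

lemma supp_periodic (S : Set ℝ) (hA7 : ∀ x : ℝ, 0 ≤ x → (Supp S x ↔ Supp S (x + 3))) :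
    ∀ n : ℕ, ∀ x : ℝ, 0 ≤ x → (Supp S x ↔ Supp S (x + 3 * n)) := by
  intro n
  induction n with
  | zero => intro x hx; simp
  | succ n ih =>
    intro x hx
    have h1 := ih x hx
    have h2 := hA7 (x + 3 * n) (by positivity)
    rw [show x + 3 * n + 3 = x + 3 * (n + 1 : ℕ) by push_cast; ring] at h2
    exact h1.trans h2

noncomputable def baseFun (N : ℕ) (xs : ℕ → ℝ) (u : ℤ → ℝ) :
    (Fin N ⊕ₗ ℤ ⊕ₗ PUnit ⊕ₗ ℤ) → ℝ :=
  fun q => Sum.elim (fun i : Fin N => xs (i.1 + 1))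
    (fun q2 => Sum.elim u
      (fun q3 => Sum.elim (fun _ => (2:ℝ)) (fun k => u k + 1) (ofLex q3)) (ofLex q2)) (ofLex q)

noncomputable def gridMap (N : ℕ) (xs : ℕ → ℝ) (u : ℤ → ℝ) :
    ℕ ×ₗ (Fin N ⊕ₗ ℤ ⊕ₗ PUnit ⊕ₗ ℤ) → ℝ :=
  fun p => 3 * ((ofLex p).1 : ℝ) + baseFun N xs u (ofLex p).2

lemma baseFun_strictMono (N : ℕ) (xs : ℕ → ℝ) (u : ℤ → ℝ)
    (hxm : ∀ i j, 1 ≤ i → i < j → j ≤ N → xs i < xs j)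
    (hxb : ∀ i, 1 ≤ i → i ≤ N → 0 ≤ xs i ∧ xs i ≤ 1)
    (hum : StrictMono u)
    (hub : ∀ k, 1 < u k ∧ u k < 2) :
    StrictMono (baseFun N xs u) := by
  intro qp qq hpq
  rcases qp with i | k | x | k <;> rcases qq with j | l | y | l
  · have h : (toLex (Sum.inl i) : Fin N ⊕ₗ ℤ ⊕ₗ PUnit ⊕ₗ ℤ) < toLex (Sum.inl j) := hpq
    have h2 : i < j := Sum.Lex.inl_lt_inl_iff.mp h
    show xs (i.1 + 1) < xs (j.1 + 1)
    exact hxm (i.1+1) (j.1+1) (by omega) (by have := (Fin.lt_iff_val_lt_val.mp h2); omega)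
      (by have := j.isLt; omega)
  · show xs (i.1 + 1) < u l
    have h1 := (hxb (i.1+1) (by omega) (by have := i.isLt; omega)).2
    linarith [(hub l).1]
  · show xs (i.1 + 1) < 2
    have h1 := (hxb (i.1+1) (by omega) (by have := i.isLt; omega)).2
    linarith
  · show xs (i.1 + 1) < u l + 1
    have h1 := (hxb (i.1+1) (by omega) (by have := i.isLt; omega)).2
    linarith [(hub l).1]
  · exact absurd (show (toLex (Sum.inr (toLex (Sum.inl k))) : Fin N ⊕ₗ ℤ ⊕ₗ PUnit ⊕ₗ ℤ)
      < toLex (Sum.inl j) from hpq) Sum.Lex.not_inr_lt_inl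
  · have h : (toLex (Sum.inr (toLex (Sum.inl k))) : Fin N ⊕ₗ ℤ ⊕ₗ PUnit ⊕ₗ ℤ)
      < toLex (Sum.inr (toLex (Sum.inl l))) := hpq
    have h2 := Sum.Lex.inr_lt_inr_iff.mp h
    have h3 : k < l := Sum.Lex.inl_lt_inl_iff.mp h2
    show u k < u l
    exact hum h3
  · show u k < 2
    exact (hub k).2
  · show u k < u l + 1
    linarith [(hub k).2, (hub l).1]
  · exact absurd (show (toLex (Sum.inr (toLex (Sum.inr (toLex (Sum.inl x))))) : Fin N ⊕ₗ ℤ ⊕ₗ PUnit ⊕ₗ ℤ)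
      < toLex (Sum.inl j) from hpq) Sum.Lex.not_inr_lt_inl
  · have h : (toLex (Sum.inr (toLex (Sum.inr (toLex (Sum.inl x))))) : Fin N ⊕ₗ ℤ ⊕ₗ PUnit ⊕ₗ ℤ)
      < toLex (Sum.inr (toLex (Sum.inl l))) := hpq
    exact absurd (Sum.Lex.inr_lt_inr_iff.mp h) Sum.Lex.not_inr_lt_inl
  · have h : (toLex (Sum.inr (toLex (Sum.inr (toLex (Sum.inl x))))) : Fin N ⊕ₗ ℤ ⊕ₗ PUnit ⊕ₗ ℤ)
      < toLex (Sum.inr (toLex (Sum.inr (toLex (Sum.inl y))))) := hpq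
    have h2 := Sum.Lex.inl_lt_inl_iff.mp (Sum.Lex.inr_lt_inr_iff.mp (Sum.Lex.inr_lt_inr_iff.mp h))
    cases x; cases y
    exact absurd h2 (lt_irrefl _)
  · show (2:ℝ) < u l + 1
    linarith [(hub l).1]
  · exact absurd (show (toLex (Sum.inr (toLex (Sum.inr (toLex (Sum.inr k))))) : Fin N ⊕ₗ ℤ ⊕ₗ PUnit ⊕ₗ ℤ)
      < toLex (Sum.inl j) from hpq) Sum.Lex.not_inr_lt_inl
  · have h : (toLex (Sum.inr (toLex (Sum.inr (toLex (Sum.inr k))))) : Fin N ⊕ₗ ℤ ⊕ₗ PUnit ⊕ₗ ℤ)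
      < toLex (Sum.inr (toLex (Sum.inl l))) := hpq
    exact absurd (Sum.Lex.inr_lt_inr_iff.mp h) Sum.Lex.not_inr_lt_inl
  · have h : (toLex (Sum.inr (toLex (Sum.inr (toLex (Sum.inr k))))) : Fin N ⊕ₗ ℤ ⊕ₗ PUnit ⊕ₗ ℤ)
      < toLex (Sum.inr (toLex (Sum.inr (toLex (Sum.inl y))))) := hpq
    exact absurd (Sum.Lex.inr_lt_inr_iff.mp (Sum.Lex.inr_lt_inr_iff.mp h)) Sum.Lex.not_inr_lt_inl
  · have h : (toLex (Sum.inr (toLex (Sum.inr (toLex (Sum.inr k))))) : Fin N ⊕ₗ ℤ ⊕ₗ PUnit ⊕ₗ ℤ)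
      < toLex (Sum.inr (toLex (Sum.inr (toLex (Sum.inr l))))) := hpq
    have h2 : k < l := Sum.Lex.inr_lt_inr_iff.mp (Sum.Lex.inr_lt_inr_iff.mp (Sum.Lex.inr_lt_inr_iff.mp h))
    show u k + 1 < u l + 1
    linarith [hum h2]

/-- If `S ⊆ ℝ` satisfies the grid axioms A2–A7 (with landmark 0, `N ≥ 2`),
then all supporting points of `S` are nonnegative, and the set of supporting
points, with the order induced from `ℝ`, is order-isomorphic to the
lexicographic order `ℕ ×ₗ (Fin N ⊕ₗ ℤ ⊕ₗ PUnit ⊕ₗ ℤ)`, i.e. it is a linear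
ordering of order type `(N + ζ + 1 + ζ)^ω`. -/
theorem grid_supp_order_type (N : ℕ) (hN : 2 ≤ N) (S : Set ℝ)
    (h : GridAxioms N S) :
    (∀ x : ℝ, Supp S x → 0 ≤ x) ∧
    Nonempty ({x : ℝ | Supp S x} ≃o ℕ ×ₗ (Fin N ⊕ₗ ℤ ⊕ₗ PUnit ⊕ₗ ℤ)) := by
  obtain ⟨⟨h0, h1s, h2s⟩, hA3, ⟨xs, hx1, hxN, hxr, hxs⟩,
    ⟨b₁, b₂, hb₁, hb12, hb₂, hsu, hpr, hcont⟩, hA6, hA7⟩ := h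
  have part1 : ∀ x : ℝ, Supp S x → 0 ≤ x := by
    intro x hx
    by_contra hcon
    push_neg at hcon
    obtain ⟨_, z, hxz, hz⟩ := hx
    obtain ⟨t, ht1, ht2⟩ := exists_between (lt_min hxz hcon)
    exact hz t ⟨ht1, lt_of_lt_of_le ht2 (min_le_left _ _)⟩
      (hA3 t (lt_of_lt_of_le ht2 (min_le_right _ _)))
  obtain ⟨u, hum, huP, husurj⟩ := zchain_exists S b₁ b₂ hb12 hsu hpr
  obtain ⟨hXsupp, hXmono, hXsurj⟩ := chain_facts S N hN xs hx1 hxN hxs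
  have hper := supp_periodic S hA7
  have hxB : ∀ i, 1 ≤ i → i ≤ N → 0 ≤ xs i ∧ xs i ≤ 1 := by
    intro i h1 h2
    rcases eq_or_lt_of_le h2 with he | hl
    · rw [he, hxN]; exact ⟨zero_le_one, le_refl 1⟩
    · exact ⟨(hxr i h1 hl).1, (hxr i h1 hl).2.le⟩
  have hub : ∀ k, 1 < u k ∧ u k < 2 :=
    fun k => ⟨lt_trans hb₁ (huP k).1, lt_trans (huP k).2.1 hb₂⟩
  have hbase : ∀ q : Fin N ⊕ₗ ℤ ⊕ₗ PUnit ⊕ₗ ℤ,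
      0 ≤ baseFun N xs u q ∧ baseFun N xs u q < 3 ∧ Supp S (baseFun N xs u q) := by
    intro q
    rcases q with i | k | x | k
    · show 0 ≤ xs (i.1 + 1) ∧ xs (i.1 + 1) < 3 ∧ Supp S (xs (i.1 + 1))
      have hi := hxB (i.1 + 1) (by omega) (by have := i.isLt; omega)
      exact ⟨hi.1, by linarith [hi.2], hXsupp (i.1 + 1) (by omega) (by have := i.isLt; omega)⟩
    · show 0 ≤ u k ∧ u k < 3 ∧ Supp S (u k)
      exact ⟨by linarith [(hub k).1], by linarith [(hub k).2], (huP k).2.2⟩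
    · show (0:ℝ) ≤ 2 ∧ (2:ℝ) < 3 ∧ Supp S 2
      exact ⟨by norm_num, by norm_num, h2s⟩
    · show 0 ≤ u k + 1 ∧ u k + 1 < 3 ∧ Supp S (u k + 1)
      exact ⟨by linarith [(hub k).1], by linarith [(hub k).2],
        (hA6 (u k) (hub k).1 (hub k).2).mp (huP k).2.2⟩
  have hbm := baseFun_strictMono N xs u hXmono hxB hum hub
  have hFmono : StrictMono (gridMap N xs u) := by
    intro p q hpq
    rcases p with ⟨n, qp⟩
    rcases q with ⟨m, qq⟩
    have hpq' : (toLex ((n, qp) : ℕ × (Fin N ⊕ₗ ℤ ⊕ₗ PUnit ⊕ₗ ℤ)))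
        < toLex ((m, qq) : ℕ × (Fin N ⊕ₗ ℤ ⊕ₗ PUnit ⊕ₗ ℤ)) := hpq
    show 3 * (n:ℝ) + baseFun N xs u qp < 3 * (m:ℝ) + baseFun N xs u qq
    rcases (Prod.Lex.toLex_lt_toLex).mp hpq' with hlt | ⟨he, hlt⟩
    · have h1 := (hbase qp).1
      have h2 := (hbase qp).2.1
      have h3 := (hbase qq).1
      have h4 : (n:ℝ) + 1 ≤ m := by exact_mod_cast hlt
      linarith
    · simp only at he hlt
      subst he
      have := hbm hlt
      linarith
  have hrange : Set.range (gridMap N xs u) = {x : ℝ | Supp S x} := by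
    ext t
    constructor
    · rintro ⟨p, rfl⟩
      rcases p with ⟨n, q⟩
      show Supp S (3 * (n:ℝ) + baseFun N xs u q)
      have h3 := (hper n (baseFun N xs u q) (hbase q).1).mp (hbase q).2.2
      rwa [show baseFun N xs u q + 3 * (n:ℕ) = 3 * (n:ℝ) + baseFun N xs u q by push_cast; ring]
        at h3
    · intro htS
      simp only [Set.mem_setOf_eq] at htS
      have ht0 : 0 ≤ t := part1 t htS
      set n : ℕ := ⌊t/3⌋.toNat with hn
      have hn0 : (0:ℤ) ≤ ⌊t/3⌋ := Int.floor_nonneg.mpr (by positivity)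
      have hnc : (n:ℝ) = (⌊t/3⌋ : ℝ) := by
        rw [hn]; exact_mod_cast congrArg (fun z : ℤ => (z:ℝ)) (Int.toNat_of_nonneg hn0)
      set r : ℝ := t - 3 * n with hr
      have hfl := Int.floor_le (t/3)
      have hfu := Int.lt_floor_add_one (t/3)
      have hr0 : 0 ≤ r := by rw [hr]; rw [hnc]; linarith
      have hr3 : r < 3 := by rw [hr]; rw [hnc]; linarith
      have hrS : Supp S r := by
        refine (hper n r hr0).mpr ?_
        rwa [show r + 3 * (n:ℕ) = t by rw [hr]; push_cast; ring]
      rcases le_or_gt r 1 with hcase | hcase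
      · obtain ⟨i, hi1, hi2, hi3⟩ := hXsurj r hr0 hcase hrS
        refine ⟨toLex (n, toLex (Sum.inl ⟨i - 1, by omega⟩)), ?_⟩
        show 3 * (n:ℝ) + xs (i - 1 + 1) = t
        rw [show i - 1 + 1 = i by omega, hi3, hr]; ring
      · rcases lt_trichotomy r 2 with hc2 | hc2 | hc2
        · obtain ⟨hrb1, hrb2⟩ := hcont r hcase hc2 hrS
          obtain ⟨k, hk⟩ := husurj r hrb1 hrb2 hrS
          refine ⟨toLex (n, toLex (Sum.inr (toLex (Sum.inl k)))), ?_⟩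
          show 3 * (n:ℝ) + u k = t
          rw [hk, hr]; ring
        · refine ⟨toLex (n, toLex (Sum.inr (toLex (Sum.inr (toLex (Sum.inl PUnit.unit)))))), ?_⟩
          show 3 * (n:ℝ) + 2 = t
          rw [hr] at hc2; linarith
        · have h6 := hA6 (r - 1) (by linarith) (by linarith)
          rw [show r - 1 + 1 = r by ring] at h6
          have hS' : Supp S (r - 1) := h6.mpr hrS
          obtain ⟨hb1', hb2'⟩ := hcont (r - 1) (by linarith) (by linarith) hS'
          obtain ⟨k, hk⟩ := husurj (r - 1) hb1' hb2' hS'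
          refine ⟨toLex (n, toLex (Sum.inr (toLex (Sum.inr (toLex (Sum.inr k)))))), ?_⟩
          show 3 * (n:ℝ) + (u k + 1) = t
          rw [hk, hr]; ring
  exact ⟨part1,
    ⟨((StrictMono.orderIso (gridMap N xs u) hFmono).trans
      (OrderIso.setCongr _ _ hrange)).symm⟩⟩
end
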